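/- arXiv:2211.05185 — 8 statements merged into one kernel-verified Lean document; each statement's English description precedes it below -/
import Mathlib

section
/- Let Γ : D^m → D^n be non-expansive and let I ⊆ D^m be a finite set of pairwise isometric points (i.e., Γ(β)ᵀΓ(β') = βᵀβ' for all β, β' ∈ I). If ε_β ≥ 0 for each β ∈ I and ‖∑_{β∈I} ε_β β‖ = 1, then ‖∑_{β∈I} ε_β Γ(β)‖ = 1 and Γ(∑_{β∈I} ε_β β) = ∑_{β∈I} ε_β Γ(β). -/
/-!
Write `s = ∑ ε β • β` and `t = ∑ ε β • Γ β`. Since `Γ` preserves the Gram matrix of `I`, `‖t‖ = ‖s‖ = 1`.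
On the unit sphere `‖x - y‖² = 2 - 2⟪x, y⟫`, so non-expansiveness says `⟪s, β⟫ ≤ ⟪Γ s, Γ β⟫`; summing with
the weights `ε β ≥ 0` gives `1 = ⟪s, s⟫ ≤ ⟪Γ s, t⟫`, and the equality case of Cauchy–Schwarz forces `Γ s = t`.
-/

open scoped RealInnerProductSpace

section

variable {E F : Type*} [NormedAddCommGroup E] [InnerProductSpace ℝ E]
  [NormedAddCommGroup F] [InnerProductSpace ℝ F]

theorem norm_sum_smul_map_eq_of_inner_map_eq {Γ : E → F} {I : Finset E}
    (hiso : ∀ β ∈ I, ∀ β' ∈ I, ⟪Γ β, Γ β'⟫ = ⟪β, β'⟫) (ε : E → ℝ) :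
    ‖∑ β ∈ I, ε β • Γ β‖ = ‖∑ β ∈ I, ε β • β‖ := by
  have hinner : ⟪∑ β ∈ I, ε β • Γ β, ∑ β ∈ I, ε β • Γ β⟫ =
      ⟪∑ β ∈ I, ε β • β, ∑ β ∈ I, ε β • β⟫ := by
    simp only [sum_inner, inner_sum, real_inner_smul_left, real_inner_smul_right]
    refine Finset.sum_congr rfl fun β hβ => Finset.sum_congr rfl fun β' hβ' => ?_
    rw [hiso β' hβ' β hβ]
  rw [real_inner_self_eq_norm_sq, real_inner_self_eq_norm_sq] at hinner
  exact (sq_eq_sq₀ (norm_nonneg _) (norm_nonneg _)).mp hinner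

theorem real_inner_le_of_norm_sub_le {x y : E} {x' y' : F} (hx : ‖x'‖ = ‖x‖) (hy : ‖y'‖ = ‖y‖)
    (h : ‖x' - y'‖ ≤ ‖x - y‖) : ⟪x, y⟫ ≤ ⟪x', y'⟫ := by
  have hsq : ‖x' - y'‖ ^ 2 ≤ ‖x - y‖ ^ 2 := pow_le_pow_left₀ (norm_nonneg _) h 2
  rw [norm_sub_sq_real, norm_sub_sq_real, hx, hy] at hsq
  linarith

theorem eq_of_norm_eq_one_of_one_le_inner {x y : E} (hx : ‖x‖ = 1) (hy : ‖y‖ = 1)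
    (h : 1 ≤ ⟪x, y⟫) : x = y := by
  have hle : ⟪x, y⟫ ≤ 1 := by simpa [hx, hy] using real_inner_le_norm x y
  exact (inner_eq_one_iff_of_norm_eq_one hx hy).mp (le_antisymm hle h)

end

theorem stmt3 (n m : ℕ)
    (Γ : EuclideanSpace ℝ (Fin m) → EuclideanSpace ℝ (Fin n))
    (hΓ : ∀ β : EuclideanSpace ℝ (Fin m), ‖β‖ = 1 → ‖Γ β‖ = 1)
    (hne : ∀ β β' : EuclideanSpace ℝ (Fin m), ‖β‖ = 1 → ‖β'‖ = 1 →
      ‖Γ β - Γ β'‖ ≤ ‖β - β'‖)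
    (I : Finset (EuclideanSpace ℝ (Fin m)))
    (hI : ∀ β ∈ I, ‖β‖ = 1)
    (hiso : ∀ β ∈ I, ∀ β' ∈ I, ⟪Γ β, Γ β'⟫ = ⟪β, β'⟫)
    (ε : EuclideanSpace ℝ (Fin m) → ℝ) (hε : ∀ β ∈ I, 0 ≤ ε β)
    (hsum : ‖∑ β ∈ I, ε β • β‖ = 1) :
    ‖∑ β ∈ I, ε β • Γ β‖ = 1 ∧
    Γ (∑ β ∈ I, ε β • β) = ∑ β ∈ I, ε β • Γ β := by
  set s := ∑ β ∈ I, ε β • β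
  have hnorm : ‖∑ β ∈ I, ε β • Γ β‖ = 1 := (norm_sum_smul_map_eq_of_inner_map_eq hiso ε).trans hsum
  refine ⟨hnorm, eq_of_norm_eq_one_of_one_le_inner (hΓ s hsum) hnorm ?_⟩
  calc (1 : ℝ) = ⟪s, s⟫ := by rw [real_inner_self_eq_norm_sq, hsum, one_pow]
    _ = ∑ β ∈ I, ε β * ⟪s, β⟫ := by simp only [s, inner_sum, real_inner_smul_right]
    _ ≤ ∑ β ∈ I, ε β * ⟪Γ s, Γ β⟫ := by
      refine Finset.sum_le_sum fun β hβ => mul_le_mul_of_nonneg_left ?_ (hε β hβ)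
      exact real_inner_le_of_norm_sub_le (by rw [hΓ s hsum, hsum])
        (by rw [hΓ β (hI β hβ), hI β hβ]) (hne s β hsum (hI β hβ))
    _ = ⟪Γ s, ∑ β ∈ I, ε β • Γ β⟫ := by simp only [inner_sum, real_inner_smul_right]
end

section
/- Let Γ : D^m → D^n be continuous and define C_Γ = {(x,y) : Γ(β)ᵀx − βᵀy ≥ 0 for all β ∈ D^m}. If C_Γ is full-dimensional (has nonempty interior), then (0,0) ∉ conv({(Γ(β), −β) : β ∈ D^m}). -/
/-!
At an interior point `(x, y)` of `C_Γ` every defining inequality holds strictly, because a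
nonzero continuous linear functional is an open map, so the interior of `{0 ≤ L}` is `{0 < L}`.
Then `q ↦ ⟪q.1, x⟫ + ⟪q.2, y⟫` is positive on every generator `(Γ β, -β)`, hence on their convex
hull, while it vanishes at the origin.
-/

open scoped RealInnerProductSpace

theorem StrongDual.interior_setOf_nonneg {R M : Type*} [Field R] [LinearOrder R]
    [IsStrictOrderedRing R] [TopologicalSpace R] [OrderTopology R] [AddCommGroup M]
    [TopologicalSpace M] [ContinuousAdd M] [Module R M] [ContinuousSMul R M]
    (f : StrongDual R M) (hf : f ≠ 0) :
    interior {x | 0 ≤ f x} = {x | 0 < f x} := by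
  have h := (f.isOpenMap_of_ne_zero hf).preimage_interior_eq_interior_preimage f.continuous
    (Set.Ici 0)
  rw [interior_Ici] at h
  exact h.symm

theorem zero_notMem_convexHull_of_forall_pos {𝕜 E : Type*} [Field 𝕜] [LinearOrder 𝕜]
    [IsStrictOrderedRing 𝕜] [AddCommGroup E] [Module 𝕜 E] {s : Set E} (f : E →ₗ[𝕜] 𝕜)
    (hf : ∀ x ∈ s, 0 < f x) : 0 ∉ convexHull 𝕜 s := fun h0 ↦ by
  have : 0 < f 0 := convexHull_min hf (convex_halfSpace_gt f.isLinear 0) h0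
  simp at this

section InnerProductSpace

variable {E F : Type*} [NormedAddCommGroup E] [InnerProductSpace ℝ E]
  [NormedAddCommGroup F] [InnerProductSpace ℝ F]

theorem inner_sub_inner_pos_of_mem_interior {Γ : F → E} {S : Set F} {p : E × F}
    (hp : p ∈ interior {q : E × F | ∀ β ∈ S, 0 ≤ ⟪Γ β, q.1⟫ - ⟪β, q.2⟫})
    {β : F} (hβS : β ∈ S) (hβ : β ≠ 0) : 0 < ⟪Γ β, p.1⟫ - ⟪β, p.2⟫ := by
  set L : StrongDual ℝ (E × F) := (innerSL ℝ (Γ β)).comp (.fst ℝ E F) -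
    (innerSL ℝ β).comp (.snd ℝ E F)
  have hL : L ≠ 0 := fun h ↦ by
    simpa [L, hβ] using DFunLike.congr_fun h (0, -β)
  have hsub : {q : E × F | ∀ β ∈ S, 0 ≤ ⟪Γ β, q.1⟫ - ⟪β, q.2⟫} ⊆ {q | 0 ≤ L q} :=
    fun q hq ↦ hq β hβS
  have hpL := interior_mono hsub hp
  rwa [L.interior_setOf_nonneg hL] at hpL

theorem zero_notMem_convexHull_of_interior_nonempty (Γ : F → E) {S : Set F} (hS : 0 ∉ S)
    (hC : (interior {q : E × F | ∀ β ∈ S, 0 ≤ ⟪Γ β, q.1⟫ - ⟪β, q.2⟫}).Nonempty) :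
    0 ∉ convexHull ℝ ((fun β ↦ (Γ β, -β)) '' S) := by
  obtain ⟨p, hp⟩ := hC
  refine zero_notMem_convexHull_of_forall_pos
    (innerₛₗ ℝ p.1 ∘ₗ .fst ℝ E F + innerₛₗ ℝ p.2 ∘ₗ .snd ℝ E F) ?_
  rintro _ ⟨β, hβS, rfl⟩
  have h := inner_sub_inner_pos_of_mem_interior hp hβS (ne_of_mem_of_not_mem hβS hS)
  simpa [real_inner_comm, sub_eq_add_neg] using h

end InnerProductSpace

theorem stmt6_general (n m : ℕ)
    (Γ : EuclideanSpace ℝ (Fin m) → EuclideanSpace ℝ (Fin n))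
    (C : Set (EuclideanSpace ℝ (Fin n) × EuclideanSpace ℝ (Fin m)))
    (hC : C = {p | ∀ β : EuclideanSpace ℝ (Fin m), ‖β‖ = 1 →
      0 ≤ ⟪Γ β, p.1⟫ - ⟪β, p.2⟫})
    (hfull : (interior C).Nonempty) :
    ((0 : EuclideanSpace ℝ (Fin n)), (0 : EuclideanSpace ℝ (Fin m))) ∉
      convexHull ℝ {p : EuclideanSpace ℝ (Fin n) × EuclideanSpace ℝ (Fin m) |
        ∃ β, ‖β‖ = 1 ∧ p = (Γ β, -β)} := by
  subst hC
  have h := zero_notMem_convexHull_of_interior_nonempty Γ (S := {β | ‖β‖ = 1}) (by simp) hfull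
  rw [← Prod.mk_zero_zero] at h
  convert h using 3
  ext p
  simp [eq_comm]

theorem stmt6 (n m : ℕ)
    (Γ : EuclideanSpace ℝ (Fin m) → EuclideanSpace ℝ (Fin n))
    (hΓ : ∀ β : EuclideanSpace ℝ (Fin m), ‖β‖ = 1 → ‖Γ β‖ = 1)
    (hcont : ContinuousOn Γ {β | ‖β‖ = 1})
    (C : Set (EuclideanSpace ℝ (Fin n) × EuclideanSpace ℝ (Fin m)))
    (hC : C = {p | ∀ β : EuclideanSpace ℝ (Fin m), ‖β‖ = 1 →
      0 ≤ ⟪Γ β, p.1⟫ - ⟪β, p.2⟫})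
    (hfull : (interior C).Nonempty) :
    ((0 : EuclideanSpace ℝ (Fin n)), (0 : EuclideanSpace ℝ (Fin m))) ∉
      convexHull ℝ {p : EuclideanSpace ℝ (Fin n) × EuclideanSpace ℝ (Fin m) |
        ∃ β, ‖β‖ = 1 ∧ p = (Γ β, -β)} :=
  stmt6_general n m Γ C hC hfull
end

section
/- Let Γ : D^m → D^n be continuous and define C_Γ = {(x,y) : Γ(β)ᵀx − βᵀy ≥ 0 for all β ∈ D^m}. If (0,0) ∉ conv({(Γ(β), −β) : β ∈ D^m}), then C_Γ is full-dimensional. -/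
open scoped RealInnerProductSpace

private lemma sum_pad {M : Type*} [AddCommMonoid M] {k d : ℕ} (hkd : k ≤ d) (G : Fin k → M) :
    (∑ i : Fin d, if h : (i : ℕ) < k then G ⟨i, h⟩ else 0) = ∑ j : Fin k, G j := by
  have hf : ∀ n : ℕ, (∑ i : Fin n, if h : (i : ℕ) < k then G ⟨i, h⟩ else 0) =
      ∑ i ∈ Finset.range n, if h : i < k then G ⟨i, h⟩ else 0 := by
    intro n
    rw [Finset.sum_range fun i => if h : i < k then G ⟨i, h⟩ else 0]
  rw [hf d, ← Finset.sum_subset (Finset.range_subset_range.mpr hkd)]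
  · rw [← hf k]
    apply Finset.sum_congr rfl
    intro i _
    rw [dif_pos i.2]
  · intro i _ hik
    rw [Finset.mem_range, not_lt] at hik
    rw [dif_neg (not_lt.mpr hik)]

set_option maxHeartbeats 1000000 in
private lemma isCompact_convexHull_aux {E : Type*} [NormedAddCommGroup E] [NormedSpace ℝ E]
    [FiniteDimensional ℝ E] {s : Set E} (hs : IsCompact s) :
    IsCompact (convexHull ℝ s) := by
  rcases s.eq_empty_or_nonempty with rfl | ⟨p0, hp0⟩
  · simp
  set d : ℕ := Module.finrank ℝ E + 1 with hd
  have himg : convexHull ℝ s =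
      (fun q : (Fin d → ℝ) × (Fin d → E) => ∑ i, q.1 i • q.2 i) ''
        (stdSimplex ℝ (Fin d) ×ˢ Set.univ.pi fun _ : Fin d => s) := by
    apply Set.Subset.antisymm
    · intro x hx
      rw [convexHull_eq_union] at hx
      simp only [Set.mem_iUnion] at hx
      obtain ⟨t, hts, hai, hxt⟩ := hx
      have hcard : t.card ≤ d := by
        have h1 := hai.card_le_finrank_succ
        have h2 : Module.finrank ℝ (vectorSpan ℝ (Set.range ((↑) : t → E))) ≤
            Module.finrank ℝ E := Submodule.finrank_le _
        rw [Fintype.card_coe] at h1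
        omega
      rw [Finset.convexHull_eq] at hxt
      obtain ⟨w, hw0, hw1, hwx⟩ := hxt
      set e := t.equivFin with he
      set wv : Fin d → ℝ := fun i => if h : (i : ℕ) < t.card then w (e.symm ⟨i, h⟩) else 0
        with hwv
      set zv : Fin d → E := fun i => if h : (i : ℕ) < t.card then (e.symm ⟨i, h⟩ : E) else p0
        with hzv
      refine ⟨(wv, zv), ⟨?_, ?_⟩, ?_⟩
      · constructor
        · intro i
          simp only [hwv]
          split_ifs with h
          · exact hw0 _ (e.symm ⟨i, h⟩).2
          · exact le_refl 0
        · have h1 : (∑ i : Fin d, wv i) = ∑ j : Fin t.card, w ((e.symm j : t) : E) := by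
            rw [hwv]; exact sum_pad hcard (fun j => w ((e.symm j : t) : E))
          have h2 : (∑ j : Fin t.card, w ((e.symm j : t) : E)) = ∑ y : t, w (y : E) :=
            Equiv.sum_comp e.symm (fun y : t => w (y : E))
          have h3 : (∑ y : t, w (y : E)) = ∑ y ∈ t, w y := Finset.sum_attach t w
          show (∑ i : Fin d, wv i) = 1
          rw [h1, h2, h3, hw1]
      · intro i _
        simp only [hzv]
        split_ifs with h
        · exact hts (e.symm ⟨i, h⟩).2
        · exact hp0
      · show (∑ i : Fin d, wv i • zv i) = x
        have hterm : ∀ i : Fin d, wv i • zv i =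
            if h : (i : ℕ) < t.card then
              w (e.symm ⟨i, h⟩) • ((e.symm ⟨i, h⟩ : E)) else 0 := by
          intro i
          simp only [hwv, hzv]
          split_ifs with h
          · rfl
          · simp
        calc ∑ i : Fin d, wv i • zv i
            = ∑ i : Fin d, if h : (i : ℕ) < t.card then
                w (e.symm ⟨i, h⟩) • ((e.symm ⟨i, h⟩ : E)) else 0 :=
              Finset.sum_congr rfl fun i _ => hterm i
          _ = ∑ j : Fin t.card, w (e.symm j) • ((e.symm j : E)) :=
              sum_pad hcard (fun j => w ((e.symm j : t) : E) • ((e.symm j : t) : E))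
          _ = ∑ y : t, w y • (y : E) := Equiv.sum_comp e.symm (fun y : t => w y • (y : E))
          _ = ∑ y ∈ t, w y • y := Finset.sum_attach t fun y => w y • y
          _ = t.centerMass w id := by
              rw [Finset.centerMass_eq_of_sum_1 _ _ hw1]; rfl
          _ = x := hwx
    · rintro x ⟨⟨wv, zv⟩, ⟨hw, hz⟩, rfl⟩
      refine (convex_convexHull ℝ s).sum_mem (fun i _ => hw.1 i) hw.2 fun i _ => ?_
      exact subset_convexHull ℝ s (hz i (Set.mem_univ i))
  rw [himg]
  refine (((isCompact_stdSimplex ℝ (Fin d)).prod (isCompact_univ_pi fun _ => hs))).image ?_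
  exact continuous_finset_sum _ fun i _ =>
    ((continuous_apply i).comp continuous_fst).smul ((continuous_apply i).comp continuous_snd)

theorem stmt7 (n m : ℕ)
    (Γ : EuclideanSpace ℝ (Fin m) → EuclideanSpace ℝ (Fin n))
    (hΓ : ∀ β : EuclideanSpace ℝ (Fin m), ‖β‖ = 1 → ‖Γ β‖ = 1)
    (hcont : ContinuousOn Γ {β | ‖β‖ = 1})
    (C : Set (EuclideanSpace ℝ (Fin n) × EuclideanSpace ℝ (Fin m)))
    (hC : C = {p | ∀ β : EuclideanSpace ℝ (Fin m), ‖β‖ = 1 →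
      0 ≤ ⟪Γ β, p.1⟫ - ⟪β, p.2⟫})
    (hzero : ((0 : EuclideanSpace ℝ (Fin n)), (0 : EuclideanSpace ℝ (Fin m))) ∉
      convexHull ℝ {p : EuclideanSpace ℝ (Fin n) × EuclideanSpace ℝ (Fin m) |
        ∃ β, ‖β‖ = 1 ∧ p = (Γ β, -β)}) :
    (interior C).Nonempty := by
  classical
  set S : Set (EuclideanSpace ℝ (Fin n) × EuclideanSpace ℝ (Fin m)) :=
    {p | ∃ β, ‖β‖ = 1 ∧ p = (Γ β, -β)} with hS
  have hsphere : {β : EuclideanSpace ℝ (Fin m) | ‖β‖ = 1} =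
      Metric.sphere (0 : EuclideanSpace ℝ (Fin m)) 1 := by
    ext β; simp [dist_zero_right]
  have hScompact : IsCompact S := by
    have himg : S = (fun β : EuclideanSpace ℝ (Fin m) => (Γ β, -β)) '' {β | ‖β‖ = 1} := by
      ext p
      constructor
      · rintro ⟨β, hβ, rfl⟩; exact ⟨β, hβ, rfl⟩
      · rintro ⟨β, hβ, rfl⟩; exact ⟨β, hβ, rfl⟩
    rw [himg, hsphere]
    refine (isCompact_sphere (0 : EuclideanSpace ℝ (Fin m)) 1).image_of_continuousOn ?_
    refine ContinuousOn.prodMk ?_ continuous_neg.continuousOn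
    rwa [hsphere] at hcont
  have hclosed : IsClosed (convexHull ℝ S) := (isCompact_convexHull_aux hScompact).isClosed
  obtain ⟨f, c, hfc, hfs⟩ :=
    geometric_hahn_banach_point_closed (convex_convexHull ℝ S) hclosed hzero
  have hc : 0 < c := by simpa [Prod.mk_zero_zero] using hfc
  set u0 : EuclideanSpace ℝ (Fin n) :=
    (InnerProductSpace.toDual ℝ _).symm
      (f.comp (ContinuousLinearMap.inl ℝ (EuclideanSpace ℝ (Fin n)) (EuclideanSpace ℝ (Fin m))))
    with hu0
  set v0 : EuclideanSpace ℝ (Fin m) :=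
    (InnerProductSpace.toDual ℝ _).symm
      (f.comp (ContinuousLinearMap.inr ℝ (EuclideanSpace ℝ (Fin n)) (EuclideanSpace ℝ (Fin m))))
    with hv0
  have hrep : ∀ p : EuclideanSpace ℝ (Fin n) × EuclideanSpace ℝ (Fin m),
      f p = ⟪u0, p.1⟫ + ⟪v0, p.2⟫ := by
    intro p
    have h1 : ⟪u0, p.1⟫ = f (p.1, 0) := by
      rw [hu0, InnerProductSpace.toDual_symm_apply]; rfl
    have h2 : ⟪v0, p.2⟫ = f (0, p.2) := by
      rw [hv0, InnerProductSpace.toDual_symm_apply]; rfl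
    rw [h1, h2, ← map_add]
    congr 1
    simp
  have key : ∀ β : EuclideanSpace ℝ (Fin m), ‖β‖ = 1 → c ≤ ⟪u0, Γ β⟫ - ⟪v0, β⟫ := by
    intro β hβ
    have hmem : ((Γ β, -β) : EuclideanSpace ℝ (Fin n) × EuclideanSpace ℝ (Fin m)) ∈
        convexHull ℝ S := subset_convexHull ℝ S ⟨β, hβ, rfl⟩
    have hlt := hfs _ hmem
    rw [hrep] at hlt
    simp only [inner_neg_right] at hlt
    linarith
  have hball : Metric.ball ((u0, v0) :
      EuclideanSpace ℝ (Fin n) × EuclideanSpace ℝ (Fin m)) (c / 2) ⊆ C := by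
    intro p hp
    rw [hC]
    intro β hβ
    have hd1 : ‖p.1 - u0‖ < c / 2 := by
      have hle : dist p.1 (u0, v0).1 ≤ dist p (u0, v0) := by
        rw [Prod.dist_eq]; exact le_max_left _ _
      have := hle.trans_lt (Metric.mem_ball.mp hp)
      simpa [dist_eq_norm] using this
    have hd2 : ‖p.2 - v0‖ < c / 2 := by
      have hle : dist p.2 (u0, v0).2 ≤ dist p (u0, v0) := by
        rw [Prod.dist_eq]; exact le_max_right _ _
      have := hle.trans_lt (Metric.mem_ball.mp hp)
      simpa [dist_eq_norm] using this
    have e1 : ⟪Γ β, p.1⟫ = ⟪u0, Γ β⟫ + ⟪Γ β, p.1 - u0⟫ := by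
      rw [inner_sub_right, real_inner_comm u0]
      ring
    have e2 : ⟪β, p.2⟫ = ⟪v0, β⟫ + ⟪β, p.2 - v0⟫ := by
      rw [inner_sub_right, real_inner_comm v0]
      ring
    have b1 : |⟪Γ β, p.1 - u0⟫| ≤ ‖p.1 - u0‖ := by
      have := abs_real_inner_le_norm (Γ β) (p.1 - u0)
      rwa [hΓ β hβ, one_mul] at this
    have b2 : |⟪β, p.2 - v0⟫| ≤ ‖p.2 - v0‖ := by
      have := abs_real_inner_le_norm β (p.2 - v0)
      rwa [hβ, one_mul] at this
    have hk := key β hβ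
    rw [e1, e2]
    have h1 := (abs_le.mp b1).1
    have h2 := (abs_le.mp b2).2
    linarith
  have hmem : ((u0, v0) : EuclideanSpace ℝ (Fin n) × EuclideanSpace ℝ (Fin m)) ∈ interior C := by
    apply interior_mono hball
    rw [Metric.isOpen_ball.interior_eq]
    exact Metric.mem_ball_self (by linarith)
  exact ⟨_, hmem⟩
end

section
/- Let Γ : D^m → D^n and suppose β¹, β² ∈ D^m satisfy β¹ᵀβ² > Γ(β¹)ᵀΓ(β²) (i.e., the pair is expansive). Then C' := C_Γ + cone({(Γ(β¹), β¹)}) (Minkowski sum) is a Q-free convex set that strictly contains C_Γ, where C_Γ = {(x,y) : Γ(β)ᵀx − βᵀy ≥ 0 for all β ∈ D^m} and Q = {(x,y) : ‖x‖ ≤ ‖y‖}. -/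
open scoped RealInnerProductSpace Pointwise

theorem stmt9 (n m : ℕ)
    (Γ : EuclideanSpace ℝ (Fin m) → EuclideanSpace ℝ (Fin n))
    (hΓ : ∀ β : EuclideanSpace ℝ (Fin m), ‖β‖ = 1 → ‖Γ β‖ = 1)
    (β1 β2 : EuclideanSpace ℝ (Fin m)) (hβ1 : ‖β1‖ = 1) (hβ2 : ‖β2‖ = 1)
    (hexp : ⟪Γ β1, Γ β2⟫ < ⟪β1, β2⟫)
    (C Q C' : Set (EuclideanSpace ℝ (Fin n) × EuclideanSpace ℝ (Fin m)))
    (hC : C = {p | ∀ β : EuclideanSpace ℝ (Fin m), ‖β‖ = 1 →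
      0 ≤ ⟪Γ β, p.1⟫ - ⟪β, p.2⟫})
    (hQ : Q = {p | ‖p.1‖ ≤ ‖p.2‖})
    (hfull : (interior C).Nonempty)
    (hC' : C' = C + {p : EuclideanSpace ℝ (Fin n) × EuclideanSpace ℝ (Fin m) |
      ∃ lam : ℝ, 0 ≤ lam ∧ p = lam • (Γ β1, β1)}) :
    Convex ℝ C' ∧ interior C' ∩ Q = ∅ ∧ C ⊂ C' := by
  have hGβ1 : ‖Γ β1‖ = 1 := hΓ β1 hβ1
  -- C is convex
  have hconvC : Convex ℝ C := by
    rw [hC]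
    intro p hp q hq a b ha hb hab β hβ
    have h1 := hp β hβ
    have h2 := hq β hβ
    simp only [Set.mem_setOf_eq, Prod.fst_add, Prod.snd_add, Prod.smul_fst, Prod.smul_snd,
      inner_add_right, real_inner_smul_right] at *
    nlinarith
  -- ray is convex
  have hconvB : Convex ℝ {p : EuclideanSpace ℝ (Fin n) × EuclideanSpace ℝ (Fin m) |
      ∃ lam : ℝ, 0 ≤ lam ∧ p = lam • (Γ β1, β1)} := by
    rintro p ⟨l, hl, rfl⟩ q ⟨k, hk, rfl⟩ a b ha hb hab
    exact ⟨a * l + b * k, by positivity, by rw [add_smul, smul_smul, smul_smul]⟩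
  have hconv : Convex ℝ C' := by rw [hC']; exact hconvC.add hconvB
  -- C ⊆ S
  have hCS : ∀ p ∈ C, ‖p.2‖ ≤ ‖p.1‖ := by
    intro p hp
    rw [hC] at hp
    rcases eq_or_ne p.2 0 with h0 | h0
    · rw [h0, norm_zero]; exact norm_nonneg _
    · have hn : ‖p.2‖ ≠ 0 := norm_ne_zero_iff.mpr h0
      set β : EuclideanSpace ℝ (Fin m) := ‖p.2‖⁻¹ • p.2 with hβdef
      have hβn : ‖β‖ = 1 := by
        rw [hβdef, norm_smul, norm_inv, norm_norm, inv_mul_cancel₀ hn]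
      have h1 := hp β hβn
      have h2 : ⟪β, p.2⟫ = ‖p.2‖ := by
        rw [hβdef, real_inner_smul_left, real_inner_self_eq_norm_sq]
        field_simp
      have h3 : ⟪Γ β, p.1⟫ ≤ ‖Γ β‖ * ‖p.1‖ := real_inner_le_norm _ _
      rw [hΓ β hβn, one_mul] at h3
      linarith [h1, h2 ▸ h1]
  -- C' ⊆ S
  have hC'S : ∀ p ∈ C', ‖p.2‖ ≤ ‖p.1‖ := by
    intro p hp
    rw [hC'] at hp
    rcases Set.mem_add.mp hp with ⟨c, hc, z, ⟨lam, hlam, rfl⟩, rfl⟩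
    have hc1 : ‖c.2‖ ≤ ‖c.1‖ := hCS c hc
    have hc2 : 0 ≤ ⟪Γ β1, c.1⟫ - ⟪β1, c.2⟫ := by rw [hC] at hc; exact hc β1 hβ1
    have e1 : (c + lam • (Γ β1, β1)).1 = c.1 + lam • Γ β1 := rfl
    have e2 : (c + lam • (Γ β1, β1)).2 = c.2 + lam • β1 := rfl
    rw [e1, e2]
    have q1 : ‖c.1 + lam • Γ β1‖ ^ 2 = ‖c.1‖ ^ 2 + 2 * (lam * ⟪c.1, Γ β1⟫) + lam ^ 2 := by
      rw [norm_add_sq_real, real_inner_smul_right, norm_smul, Real.norm_eq_abs,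
        mul_pow, sq_abs, hGβ1]
      ring
    have q2 : ‖c.2 + lam • β1‖ ^ 2 = ‖c.2‖ ^ 2 + 2 * (lam * ⟪c.2, β1⟫) + lam ^ 2 := by
      rw [norm_add_sq_real, real_inner_smul_right, norm_smul, Real.norm_eq_abs,
        mul_pow, sq_abs, hβ1]
      ring
    have hcomm1 : ⟪c.1, Γ β1⟫ = ⟪Γ β1, c.1⟫ := real_inner_comm _ _
    have hcomm2 : ⟪c.2, β1⟫ = ⟪β1, c.2⟫ := real_inner_comm _ _
    have hsq : ‖c.2 + lam • β1‖ ^ 2 ≤ ‖c.1 + lam • Γ β1‖ ^ 2 := by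
      rw [q1, q2, hcomm1, hcomm2]
      nlinarith [norm_nonneg c.1, norm_nonneg c.2]
    exact (pow_le_pow_iff_left₀ (norm_nonneg _) (norm_nonneg _) two_ne_zero).mp hsq
  -- interior disjointness
  have hdisj : interior C' ∩ Q = ∅ := by
    rw [Set.eq_empty_iff_forall_notMem]
    rintro p ⟨hpI, hpQ⟩
    rw [hQ] at hpQ
    have hpC' : p ∈ C' := interior_subset hpI
    have heq : ‖p.1‖ = ‖p.2‖ := le_antisymm hpQ (hC'S p hpC')
    obtain ⟨ε, hε, hball⟩ := Metric.mem_nhds_iff.mp (mem_interior_iff_mem_nhds.mp hpI)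
    set δ : ℝ := if 0 ≤ ⟪p.2, β1⟫ then ε / 2 else -(ε / 2) with hδdef
    have hδ1 : 0 ≤ δ * ⟪p.2, β1⟫ := by
      rw [hδdef]; split_ifs with h
      · positivity
      · push_neg at h; nlinarith
    have hδabs : |δ| = ε / 2 := by
      rw [hδdef]; split_ifs <;> simp [abs_of_nonneg, abs_of_nonpos, le_of_lt hε,
        abs_of_pos, half_pos hε, abs_neg]
    set q : EuclideanSpace ℝ (Fin n) × EuclideanSpace ℝ (Fin m) :=
      (p.1, p.2 + δ • β1) with hqdef
    have hqball : q ∈ Metric.ball p ε := by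
      rw [Metric.mem_ball, Prod.dist_eq]
      have d1 : dist q.1 p.1 = 0 := by rw [hqdef, dist_self]
      have d2 : dist q.2 p.2 = ε / 2 := by
        rw [hqdef]
        simp only [dist_eq_norm, add_sub_cancel_left, norm_smul, Real.norm_eq_abs,
          hβ1, mul_one, hδabs]
      rw [d1, d2]
      simp [hε.le]
      linarith
    have hqC' : q ∈ C' := hball hqball
    have hle : ‖q.2‖ ≤ ‖q.1‖ := hC'S q hqC'
    have hq1 : ‖q.1‖ = ‖p.1‖ := rfl
    have hq2 : ‖q.2‖ ^ 2 = ‖p.2‖ ^ 2 + 2 * ⟪p.2, δ • β1⟫ + δ ^ 2 := by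
      show ‖p.2 + δ • β1‖ ^ 2 = _
      rw [norm_add_sq_real, norm_smul, Real.norm_eq_abs, mul_pow, sq_abs, hβ1]
      ring
    rw [real_inner_smul_right] at hq2
    have hδ2 : 0 < δ ^ 2 := by
      have hne : δ ≠ 0 := by
        rw [hδdef]; split_ifs
        · positivity
        · intro h; rw [neg_eq_zero] at h; linarith
      positivity
    nlinarith [norm_nonneg q.2, norm_nonneg p.2]
  refine ⟨hconv, hdisj, ?_⟩
  -- strict inclusion
  have hsub : C ⊆ C' := by
    intro c hc
    rw [hC']
    refine Set.mem_add.mpr ⟨c, hc, 0, ⟨0, le_refl 0, by simp⟩, (add_zero c)⟩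
  rw [Set.ssubset_def]
  refine ⟨hsub, ?_⟩
  intro hsub2
  obtain ⟨c, hc⟩ := hfull
  have hcC : c ∈ C := interior_subset hc
  have hA : 0 ≤ ⟪Γ β2, c.1⟫ - ⟪β2, c.2⟫ := by rw [hC] at hcC; exact hcC β2 hβ2
  set d : ℝ := ⟪β1, β2⟫ - ⟪Γ β1, Γ β2⟫ with hddef
  have hd : 0 < d := by rw [hddef]; linarith
  set lam : ℝ := (⟪Γ β2, c.1⟫ - ⟪β2, c.2⟫ + 1) / d with hlamdef
  have hlam : 0 ≤ lam := by positivity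
  set p : EuclideanSpace ℝ (Fin n) × EuclideanSpace ℝ (Fin m) :=
    c + lam • (Γ β1, β1) with hpdef
  have hpC' : p ∈ C' := by
    rw [hC']
    exact Set.mem_add.mpr ⟨c, hcC, lam • (Γ β1, β1), ⟨lam, hlam, rfl⟩, rfl⟩
  have hpC : p ∈ C := hsub2 hpC'
  rw [hC] at hpC
  have := hpC β2 hβ2
  have e1 : p.1 = c.1 + lam • Γ β1 := rfl
  have e2 : p.2 = c.2 + lam • β1 := rfl
  rw [e1, e2, inner_add_right, inner_add_right, real_inner_smul_right,
    real_inner_smul_right] at this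
  have hc1 : ⟪Γ β2, Γ β1⟫ = ⟪Γ β1, Γ β2⟫ := real_inner_comm _ _
  have hc2 : ⟪β2, β1⟫ = ⟪β1, β2⟫ := real_inner_comm _ _
  rw [hc1, hc2] at this
  have hld : lam * d = ⟪Γ β2, c.1⟫ - ⟪β2, c.2⟫ + 1 := by
    rw [hlamdef]; field_simp
  nlinarith
end

section
/- Let β ∈ D^m and Q_β = {(x,y) ∈ ℝ^n × ℝ^m : ‖x‖ ≤ βᵀy}. Every valid inequality for Q_β that is tight at some point of Q_β has, after scaling by a positive number, the form γᵀx − βᵀy ≤ 0 for some γ ∈ ℝ^n with ‖γ‖ ≤ 1. -/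
/-!
The cone `Q_β` is invariant under positive scaling, so a tight valid inequality has right-hand
side `0`. Since `(0, y) ∈ Q_β` for every `y ⊥ β` (with either sign), the `y`-part `b` of the normal
vector is orthogonal to `β`ᗮ, i.e. it is a multiple `r • β`; testing at `(0, β)` gives `r ≤ 0`,
and testing at `(a, t • β)` with `⟪β, t • β⟫ = ‖a‖` gives `‖a‖ ≤ -r`, with `r < 0` unless the
inequality is trivial. Dividing by `-r` yields the claimed normal form.
-/

open scoped RealInnerProductSpace

theorem eq_zero_of_valid_of_tight_of_smul_mem {V : Type*} [AddCommGroup V] [Module ℝ V]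
    {S : Set V} (hS : ∀ t : ℝ, 0 ≤ t → ∀ p ∈ S, t • p ∈ S) {f : V → ℝ} (hf : ∀ (t : ℝ) p, f (t • p) = t * f p)
    {c : ℝ} (hvalid : ∀ p ∈ S, f p ≤ c) (htight : ∃ p ∈ S, f p = c) : c = 0 := by
  obtain ⟨p, hp, rfl⟩ := htight
  have hzero := hvalid _ (hS 0 le_rfl p hp)
  have htwo := hvalid _ (hS 2 zero_le_two p hp)
  rw [hf] at hzero htwo
  linarith

theorem mem_span_singleton_of_inner_eq_zero {F : Type*} [NormedAddCommGroup F]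
    [InnerProductSpace ℝ F] {β b : F} (h : ∀ y, ⟪β, y⟫ = 0 → ⟪b, y⟫ = 0) : b ∈ ℝ ∙ β := by
  rw [← Submodule.orthogonal_orthogonal (ℝ ∙ β), Submodule.mem_orthogonal]
  intro y hy
  rw [Submodule.mem_orthogonal_singleton_iff_inner_right] at hy
  rw [real_inner_comm]
  exact h y hy

section SecondOrderCone

variable {E F : Type*} [NormedAddCommGroup E] [InnerProductSpace ℝ E]
  [NormedAddCommGroup F] [InnerProductSpace ℝ F]

def secondOrderCone (β : F) : Set (E × F) := {p | ‖p.1‖ ≤ ⟪β, p.2⟫}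

variable {β : F}

theorem smul_mem_secondOrderCone {t : ℝ} (ht : 0 ≤ t) {p : E × F}
    (hp : p ∈ secondOrderCone β) : t • p ∈ secondOrderCone β := by
  simp only [secondOrderCone, Set.mem_ofPred_eq, Prod.smul_fst, Prod.smul_snd, norm_smul,
    real_inner_smul_right, Real.norm_of_nonneg ht] at hp ⊢
  exact mul_le_mul_of_nonneg_left hp ht

variable {a : E} {b : F}
  (hvalid : ∀ p ∈ secondOrderCone β, ⟪a, p.1⟫ + ⟪b, p.2⟫ ≤ 0)
include hvalid

theorem exists_eq_smul_of_valid_secondOrderCone : ∃ r : ℝ, b = r • β := by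
  have hperp (y : F) (hy : ⟪β, y⟫ = 0) : ⟪b, y⟫ = 0 := by
    have hpos := hvalid (0, y) (by simp [secondOrderCone, hy])
    have hneg := hvalid (0, -y) (by simp [secondOrderCone, hy])
    simp only [inner_zero_right, inner_neg_right] at hpos hneg
    linarith
  obtain ⟨r, hr⟩ := Submodule.mem_span_singleton.mp (mem_span_singleton_of_inner_eq_zero hperp)
  exact ⟨r, hr.symm⟩

theorem nonpos_of_valid_secondOrderCone {r : ℝ} (hb : b = r • β) (hβ : β ≠ 0) : r ≤ 0 := by
  have h := hvalid (0, β) (by simp [secondOrderCone])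
  simp only [hb, inner_zero_right, real_inner_smul_left, zero_add] at h
  exact nonpos_of_mul_nonpos_left h (real_inner_self_pos.mpr hβ)

theorem norm_mul_norm_add_nonpos_of_valid_secondOrderCone {r : ℝ} (hb : b = r • β)
    (hβ : β ≠ 0) : ‖a‖ * (‖a‖ + r) ≤ 0 := by
  have hββ : ⟪β, β⟫ ≠ 0 := (real_inner_self_pos.mpr hβ).ne'
  have hinner : ⟪β, (‖a‖ / ⟪β, β⟫) • β⟫ = ‖a‖ := by
    rw [real_inner_smul_right, div_mul_cancel₀ _ hββ]
  have h := hvalid (a, (‖a‖ / ⟪β, β⟫) • β) hinner.ge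
  rw [hb, real_inner_smul_left, hinner, real_inner_self_eq_norm_sq] at h
  linarith

theorem exists_neg_smul_of_valid_secondOrderCone (hβ : β ≠ 0) (hab : ¬ (a = 0 ∧ b = 0)) :
    ∃ r < 0, b = r • β ∧ ‖a‖ ≤ -r := by
  obtain ⟨r, hb⟩ := exists_eq_smul_of_valid_secondOrderCone hvalid
  have hr := nonpos_of_valid_secondOrderCone hvalid hb hβ
  have hkey := norm_mul_norm_add_nonpos_of_valid_secondOrderCone hvalid hb hβ
  rcases eq_or_ne a 0 with rfl | ha
  · have hr' : r ≠ 0 := by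
      rintro rfl
      exact hab ⟨rfl, by simp [hb]⟩
    exact ⟨r, hr.lt_of_ne hr', hb, by simpa using hr⟩
  · have hle : ‖a‖ + r ≤ 0 := nonpos_of_mul_nonpos_right hkey (norm_pos_iff.mpr ha)
    exact ⟨r, by linarith [norm_pos_iff.mpr ha], hb, by linarith⟩

end SecondOrderCone

theorem stmt13 (n m : ℕ)
    (β : EuclideanSpace ℝ (Fin m)) (hβ : ‖β‖ = 1)
    (Qβ : Set (EuclideanSpace ℝ (Fin n) × EuclideanSpace ℝ (Fin m)))
    (hQβ : Qβ = {p | ‖p.1‖ ≤ ⟪β, p.2⟫})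
    (a : EuclideanSpace ℝ (Fin n)) (b : EuclideanSpace ℝ (Fin m)) (c : ℝ)
    (hab : ¬ (a = 0 ∧ b = 0))
    (hvalid : ∀ p ∈ Qβ, ⟪a, p.1⟫ + ⟪b, p.2⟫ ≤ c)
    (htight : ∃ p ∈ Qβ, ⟪a, p.1⟫ + ⟪b, p.2⟫ = c) :
    ∃ μ : ℝ, 0 < μ ∧ ∃ γ : EuclideanSpace ℝ (Fin n), ‖γ‖ ≤ 1 ∧
      μ • a = γ ∧ μ • b = -β ∧ μ * c = 0 := by
  change Qβ = secondOrderCone β at hQβ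
  subst hQβ
  have hc : c = 0 := eq_zero_of_valid_of_tight_of_smul_mem
    (fun t ht p hp ↦ smul_mem_secondOrderCone ht hp) (fun t p ↦ by simp only [Prod.smul_fst, Prod.smul_snd, real_inner_smul_right]; ring)
    hvalid htight
  subst hc
  have hβ0 : β ≠ 0 := norm_ne_zero_iff.mp (by simp [hβ])
  obtain ⟨r, hr, hb, ha⟩ := exists_neg_smul_of_valid_secondOrderCone hvalid hβ0 hab
  have hμ : 0 < (-r)⁻¹ := inv_pos.mpr (neg_pos.mpr hr)
  refine ⟨(-r)⁻¹, hμ, (-r)⁻¹ • a, ?_, rfl, ?_, mul_zero _⟩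
  · rw [norm_smul, Real.norm_of_nonneg hμ.le]
    exact inv_mul_le_one_of_le₀ ha (neg_pos.mpr hr).le
  · rw [hb, smul_smul, inv_neg, neg_mul, inv_mul_cancel₀ hr.ne, neg_one_smul]
end

section
/- Let S ⊆ ℝ^d be closed and C ⊆ ℝ^d a closed convex full-dimensional S-free set. If C = {x : αᵀx ≤ α₀ for all (α, α₀) ∈ I} for some I ⊆ ℝ^d × ℝ and each inequality (α, α₀) ∈ I admits an exposing sequence contained in S, then C is a maximal S-free set. -/
open scoped RealInnerProductSpace

/-!
Let `K ⊇ C` be a convex `S`-free set and `y ∈ K`; fix an inequality `(α, α₀) ∈ I` with exposing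
sequence `xᵗ ∈ S`. Since `int K ∩ S = ∅`, each `xᵗ` lies outside `int K ⊇ int C ≠ ∅`, so it is
supported by a hyperplane `δᵗ` of norm `‖α‖` valid for `K`, hence for `C`, with `δ₀ᵗ = ⟪δᵗ, xᵗ⟫`.
Exposure forces `(δᵗ, δ₀ᵗ) → (α, α₀)`, and passing to the limit in `⟪δᵗ, y⟫ ≤ δ₀ᵗ` gives
`⟪α, y⟫ ≤ α₀`. Thus `y ∈ C`.
-/

open Filter Topology

section InnerProductSpace

variable {E : Type*} [NormedAddCommGroup E] [InnerProductSpace ℝ E]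

theorem Convex.exists_norm_eq_forall_inner_le_of_notMem_interior [CompleteSpace E] {K : Set E}
    (hK : Convex ℝ K) (hKint : (interior K).Nonempty) {x : E} (hx : x ∉ interior K) {r : ℝ}
    (hr : 0 < r) : ∃ v : E, ‖v‖ = r ∧ ∀ z ∈ K, ⟪v, z⟫ ≤ ⟪v, x⟫ := by
  obtain ⟨f, hf0, hf⟩ := geometric_hahn_banach_of_nonempty_interior_point hK hx hKint
  set v := (InnerProductSpace.toDual ℝ E).symm f
  have hv_apply : ∀ z, ⟪v, z⟫ = f z := fun _ => InnerProductSpace.toDual_symm_apply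
  have hv0 : 0 < ‖v‖ := norm_pos_iff.2 fun h => hf0 (by simpa [v] using h)
  have hc : 0 < r / ‖v‖ := div_pos hr hv0
  refine ⟨(r / ‖v‖) • v, ?_, fun z hz => ?_⟩
  · rw [norm_smul_of_nonneg hc.le, div_mul_cancel₀ _ hv0.ne']
  · simp only [real_inner_smul_left, hv_apply]
    exact mul_le_mul_of_nonneg_left (hf z hz) hc.le

theorem inner_le_of_tendsto_of_forall_inner_le {ι : Type*} {l : Filter ι} [l.NeBot]
    {δ : ι → E} {δ₀ : ι → ℝ} {α : E} {α₀ : ℝ} {y : E}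
    (hlim : Tendsto (fun t => (δ t, δ₀ t)) l (𝓝 (α, α₀))) (hy : ∀ t, ⟪δ t, y⟫ ≤ δ₀ t) :
    ⟪α, y⟫ ≤ α₀ :=
  le_of_tendsto_of_tendsto' (hlim.fst_nhds.inner tendsto_const_nhds) hlim.snd_nhds hy

end InnerProductSpace

theorem stmt14_general (d : ℕ)
    (S C : Set (EuclideanSpace ℝ (Fin d)))
    (hfull : (interior C).Nonempty)
    (I : Set (EuclideanSpace ℝ (Fin d) × ℝ))
    (hC : C = {x | ∀ p ∈ I, ⟪p.1, x⟫ ≤ p.2})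
    (hexp : ∀ p ∈ I, p.1 ≠ 0 ∧ ∃ x : ℕ → EuclideanSpace ℝ (Fin d),
      (∀ t, x t ∈ S) ∧
      ∀ (δ : ℕ → EuclideanSpace ℝ (Fin d)) (δ₀ : ℕ → ℝ),
        (∀ t, ‖δ t‖ = ‖p.1‖) →
        (∀ t, ∀ z ∈ C, ⟪δ t, z⟫ ≤ δ₀ t) →
        (∀ t, δ₀ t ≤ ⟪δ t, x t⟫) →
        Filter.Tendsto (fun t => (δ t, δ₀ t)) Filter.atTop (nhds (p.1, p.2))) :
    ∀ K : Set (EuclideanSpace ℝ (Fin d)),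
      IsClosed K → Convex ℝ K → interior K ∩ S = ∅ → C ⊆ K → K = C := by
  intro K _ hKconv hKfree hCK
  refine Set.Subset.antisymm ?_ hCK
  intro y hy
  rw [hC]
  intro p hp
  obtain ⟨hα, x, hxS, hexposing⟩ := hexp p hp
  have hx : ∀ t, x t ∉ interior K := fun t hxK =>
    (Set.eq_empty_iff_forall_notMem.1 hKfree) (x t) ⟨hxK, hxS t⟩
  choose δ hδnorm hδK using fun t =>
    hKconv.exists_norm_eq_forall_inner_le_of_notMem_interior (hfull.mono (interior_mono hCK))
      (hx t) (norm_pos_iff.2 hα)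
  have hlim := hexposing δ (fun t => ⟪δ t, x t⟫) hδnorm (fun t z hz => hδK t z (hCK hz))
    (fun _ => le_rfl)
  exact inner_le_of_tendsto_of_forall_inner_le hlim fun t => hδK t y hy

theorem stmt14 (d : ℕ)
    (S C : Set (EuclideanSpace ℝ (Fin d)))
    (hS : IsClosed S) (hCclosed : IsClosed C) (hCconv : Convex ℝ C)
    (hfull : (interior C).Nonempty) (hfree : interior C ∩ S = ∅)
    (I : Set (EuclideanSpace ℝ (Fin d) × ℝ))
    (hC : C = {x | ∀ p ∈ I, ⟪p.1, x⟫ ≤ p.2})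
    (hexp : ∀ p ∈ I, p.1 ≠ 0 ∧ ∃ x : ℕ → EuclideanSpace ℝ (Fin d),
      (∀ t, x t ∈ S) ∧
      ∀ (δ : ℕ → EuclideanSpace ℝ (Fin d)) (δ₀ : ℕ → ℝ),
        (∀ t, ‖δ t‖ = ‖p.1‖) →
        (∀ t, ∀ z ∈ C, ⟪δ t, z⟫ ≤ δ₀ t) →
        (∀ t, δ₀ t ≤ ⟪δ t, x t⟫) →
        Filter.Tendsto (fun t => (δ t, δ₀ t)) Filter.atTop (nhds (p.1, p.2))) :
    ∀ K : Set (EuclideanSpace ℝ (Fin d)),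
      IsClosed K → Convex ℝ K → interior K ∩ S = ∅ → C ⊆ K → K = C :=
  stmt14_general d S C hfull I hC hexp
end

section
/- Let S ⊆ ℝ^d be closed and C a closed convex full-dimensional maximal S-free set. Then there exists a set I ⊆ ℝ^d × ℝ such that C = {x : αᵀx ≤ α₀ for all (α, α₀) ∈ I} and each (α, α₀) ∈ I admits an exposing sequence contained in S. -/
open scoped RealInnerProductSpace
open Filter Metric Set MeasureTheory

variable {d : ℕ}

local notation "E" => EuclideanSpace ℝ (Fin d)

lemma mem_of_gauge_le_one {D : Set E} (hD : IsClosed D) (hconv : Convex ℝ D)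
    (h0 : (0:E) ∈ interior D) {x : E} (hx : gauge D x ≤ 1) : x ∈ D := by
  have habs : Absorbent ℝ D := absorbent_nhds_zero (mem_interior_iff_mem_nhds.1 h0)
  have h0D : (0:E) ∈ D := interior_subset h0
  have key : ∀ n : ℕ, ∃ w ∈ D, ‖w - x‖ ≤ (1/(n+1)) * ‖x‖ := by
    intro n
    have hlt : gauge D x < 1 + 1/(n+1) := by
      have : (0:ℝ) < 1/(n+1) := by positivity
      linarith
    obtain ⟨t, ht0, htl, hmem⟩ := exists_lt_of_gauge_lt habs hlt
    obtain ⟨v, hv, hveq⟩ := hmem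
    by_cases ht1 : t ≤ 1
    · refine ⟨x, ?_, by simp; positivity⟩
      rw [← hveq]
      have := hconv h0D hv (by linarith : (0:ℝ) ≤ 1 - t) ht0.le (by ring)
      simpa using this
    · push_neg at ht1
      refine ⟨v, hv, ?_⟩
      have hveq' : v = t⁻¹ • x := by rw [← hveq, inv_smul_smul₀ ht0.ne']
      have : v - x = (t⁻¹ - 1) • x := by rw [hveq', sub_smul, one_smul]
      rw [this, norm_smul]
      have ht' : t⁻¹ ≤ 1 := by
        rw [inv_le_one_iff₀]; right; linarith
      have h1 : |t⁻¹ - 1| = 1 - t⁻¹ := by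
        rw [abs_of_nonpos (by linarith)]; ring
      rw [Real.norm_eq_abs, h1]
      have htinv : 1 - t⁻¹ ≤ 1/(n+1) := by
        have h2 : 1 - t⁻¹ = (t-1)/t := by field_simp
        rw [h2]
        have : (t-1)/t ≤ t - 1 := by
          rw [div_le_iff₀ ht0]
          nlinarith
        linarith
      exact mul_le_mul_of_nonneg_right htinv (norm_nonneg x)
  -- conclude by closedness
  have : ∀ n : ℕ, ∃ w ∈ D, dist w x ≤ (1/(n+1:ℝ)) * ‖x‖ := by
    intro n; obtain ⟨w, hw, h⟩ := key n; exact ⟨w, hw, by rwa [dist_eq_norm]⟩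
  choose w hwD hwd using this
  have hw : Tendsto w atTop (nhds x) := by
    rw [tendsto_iff_dist_tendsto_zero]
    refine squeeze_zero (fun n => dist_nonneg) hwd ?_
    have h0 : Tendsto (fun n : ℕ => (1/(n+1:ℝ))) atTop (nhds 0) :=
      tendsto_one_div_add_atTop_nhds_zero_nat
    simpa using h0.mul_const ‖x‖
  exact hD.mem_of_tendsto hw (Eventually.of_forall hwD)

set_option maxHeartbeats 2000000 in
lemma exists_smooth_normal {C : Set E}
    (hCclosed : IsClosed C) (hCconv : Convex ℝ C) {c b₀ : E}
    (hc : c ∈ interior C) (hb₀ : b₀ ∈ C) (hb₀n : b₀ ∉ interior C) {ε : ℝ} (hε : 0 < ε) :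
    ∃ b α : E, b ∈ C ∧ b ∉ interior C ∧ ‖b - b₀‖ < ε ∧ ‖α‖ = 1 ∧
      (∀ z ∈ C, ⟪α, z⟫ ≤ ⟪α, b⟫) ∧
      ∀ β : E, ‖β‖ = 1 → (∀ z ∈ C, ⟪β, z⟫ ≤ ⟪β, b⟫) → β = α := by
  classical
  -- translate so that 0 is interior
  set D : Set E := (fun x : E => c + x) ⁻¹' C with hDdef
  have hDclosed : IsClosed D := hCclosed.preimage (by continuity)
  have hDconv : Convex ℝ D := by
    intro x hx y hy a b' ha hb hab
    simp only [hDdef, Set.mem_preimage] at *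
    have heq : c + (a • x + b' • y) = a • (c + x) + b' • (c + y) := by
      calc c + (a • x + b' • y) = (a + b') • c + (a • x + b' • y) := by rw [hab, one_smul]
        _ = a • (c + x) + b' • (c + y) := by module
    rw [heq]
    exact hCconv hx hy ha hb hab
  have hintD : interior D = (fun x : E => c + x) ⁻¹' interior C := by
    have : D = (Homeomorph.addLeft c) ⁻¹' C := rfl
    rw [this, ← (Homeomorph.addLeft c).preimage_interior]
    rfl
  have h0 : (0:E) ∈ interior D := by
    rw [hintD]; simpa using hc
  have h0D : (0:E) ∈ D := interior_subset h0
  have habs : Absorbent ℝ D := absorbent_nhds_zero (mem_interior_iff_mem_nhds.1 h0)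
  obtain ⟨r, hr, hball⟩ := Metric.isOpen_iff.1 isOpen_interior 0 h0
  have hballD : Metric.ball (0:E) r ⊆ D := hball.trans interior_subset
  set μ := gauge D with hμ
  -- Lipschitz bound
  have hbound : ∀ x : E, μ x ≤ (2/r) * ‖x‖ := by
    intro x
    by_cases hx0 : x = 0
    · rw [hx0]; simp [hμ, gauge_zero]
    · have hnx : 0 < ‖x‖ := norm_pos_iff.2 hx0
      refine gauge_le_of_mem (by positivity) ?_
      refine ⟨(r/2) • (‖x‖⁻¹ • x), hballD ?_, ?_⟩
      · rw [mem_ball_zero_iff]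
        rw [norm_smul, norm_smul, Real.norm_eq_abs, Real.norm_eq_abs,
          abs_of_pos (by positivity : (0:ℝ) < r/2), abs_of_pos (by positivity : (0:ℝ) < ‖x‖⁻¹),
          inv_mul_cancel₀ hnx.ne']
        linarith
      · show (2/r * ‖x‖) • ((r/2) • (‖x‖⁻¹ • x)) = x
        rw [smul_smul, smul_smul, show 2/r * ‖x‖ * (r/2) * ‖x‖⁻¹ = 1 by field_simp, one_smul]
  have hlip : LipschitzWith (Real.toNNReal (2/r)) μ := by
    apply LipschitzWith.of_dist_le_mul
    intro x y
    rw [Real.dist_eq, dist_eq_norm, Real.coe_toNNReal _ (by positivity)]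
    rw [abs_le]
    constructor
    · have := gauge_add_le hDconv habs (y - x) x
      simp only [sub_add_cancel] at this
      have h2 := hbound (y - x)
      have h3 : ‖y - x‖ = ‖x - y‖ := norm_sub_rev y x
      rw [h3] at h2
      linarith
    · have := gauge_add_le hDconv habs (x - y) y
      simp only [sub_add_cancel] at this
      have h2 := hbound (x - y)
      linarith
  -- Rademacher
  have hae : ∀ᵐ x ∂(volume : Measure E), DifferentiableAt ℝ μ x := hlip.ae_differentiableAt
  set b₀' : E := b₀ - c with hb₀'def
  have hb₀'D : b₀' ∈ D := by
    simp only [hDdef, Set.mem_preimage, hb₀'def]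
    simpa using hb₀
  have hb₀'not : b₀' ∉ interior D := by
    rw [hintD]
    simp only [Set.mem_preimage, hb₀'def]
    simpa using hb₀n
  have hμb₀' : μ b₀' = 1 := by
    refine le_antisymm (gauge_le_one_of_mem hb₀'D) ?_
    by_contra hlt
    push_neg at hlt
    obtain ⟨t, ht0, ht1, hmem⟩ := exists_lt_of_gauge_lt habs hlt
    obtain ⟨v, hv, hveq⟩ := hmem
    apply hb₀'not
    have := hDconv.combo_interior_closure_mem_interior h0 (subset_closure hv)
      (by linarith : (0:ℝ) < 1 - t) ht0.le (by ring)
    simpa [hveq] using this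
  -- pick differentiability points converging to b₀'
  have hy : ∀ n : ℕ, ∃ y : E, dist y b₀' < 1/(n+1) ∧ DifferentiableAt ℝ μ y := by
    intro n
    by_contra hcon
    push_neg at hcon
    have hsub : Metric.ball b₀' (1/(n+1)) ⊆ {x : E | ¬ DifferentiableAt ℝ μ x} := by
      intro x hx
      exact hcon x (mem_ball.1 hx)
    have hnull : (volume : Measure E) {x : E | ¬ DifferentiableAt ℝ μ x} = 0 :=
      (MeasureTheory.ae_iff).1 hae
    have := measure_mono_null hsub hnull
    exact (measure_ball_pos volume b₀' (by positivity : (0:ℝ) < 1/(n+1))).ne' this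
  choose y hyd hydiff using hy
  have hytend : Tendsto y atTop (nhds b₀') := by
    rw [tendsto_iff_dist_tendsto_zero]
    refine squeeze_zero (fun n => dist_nonneg) (fun n => (hyd n).le) ?_
    exact tendsto_one_div_add_atTop_nhds_zero_nat
  have hμtend : Tendsto (fun n => μ (y n)) atTop (nhds 1) := by
    have := (hlip.continuous.tendsto b₀').comp hytend
    rwa [hμb₀'] at this
  have hbtend : Tendsto (fun n => (μ (y n))⁻¹ • y n) atTop (nhds b₀') := by
    have h1 : Tendsto (fun n => (μ (y n))⁻¹) atTop (nhds 1) := by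
      have := hμtend.inv₀ one_ne_zero
      simpa using this
    have := h1.smul hytend
    simpa using this
  have hev : ∀ᶠ n in atTop, dist ((μ (y n))⁻¹ • y n) b₀' < ε ∧ 0 < μ (y n) := by
    filter_upwards [Metric.tendsto_nhds.1 hbtend ε hε,
      hμtend.eventually (eventually_gt_nhds (by norm_num : (0:ℝ) < 1))] with n h1 h2
    exact ⟨h1, by linarith⟩
  obtain ⟨n, hn1, hn2⟩ := hev.exists
  set s0 : ℝ := μ (y n) with hs0def
  set bp : E := s0⁻¹ • y n with hbpdef
  have hμbp : μ bp = 1 := by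
    rw [hbpdef, hμ, gauge_smul_of_nonneg (inv_nonneg.2 hn2.le), smul_eq_mul, ← hμ, ← hs0def,
      inv_mul_cancel₀ hn2.ne']
  have hbpD : bp ∈ D := mem_of_gauge_le_one hDclosed hDconv h0 hμbp.le
  have hbpnot : bp ∉ interior D := by
    intro hmem
    have := interior_subset_gauge_lt_one D hmem
    rw [← hμ] at this
    simp only [Set.mem_setOf_eq] at this
    linarith [hμbp]
  set b : E := c + bp with hbdef
  have hbC : b ∈ C := hbpD
  have hbnotC : b ∉ interior C := by
    intro hmem
    apply hbpnot
    rw [hintD]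
    exact hmem
  have hbnear : ‖b - b₀‖ < ε := by
    have : b - b₀ = bp - b₀' := by rw [hbdef, hb₀'def]; abel
    rw [this, ← dist_eq_norm]
    exact hn1
  -- differentiability of μ at bp
  have hdiffbp : DifferentiableAt ℝ μ bp := by
    have feq : μ = fun x => s0⁻¹ * μ (s0 • x) := by
      funext x
      rw [hμ, gauge_smul_of_nonneg hn2.le, smul_eq_mul, inv_mul_cancel_left₀ hn2.ne']
    rw [feq]
    have hs0bp : s0 • bp = y n := by rw [hbpdef, smul_inv_smul₀ hn2.ne']
    have hcomp : DifferentiableAt ℝ (fun x : E => μ (s0 • x)) bp := by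
      have hsm : DifferentiableAt ℝ (fun x : E => s0 • x) bp := by
        exact (differentiableAt_id.const_smul s0)
      have : DifferentiableAt ℝ μ (s0 • bp) := by rw [hs0bp]; exact hydiff n
      exact this.comp bp hsm
    exact hcomp.const_mul s0⁻¹
  -- existence of a normal vector at b
  obtain ⟨f, hf⟩ := geometric_hahn_banach_open_point hCconv.interior isOpen_interior hbnotC
  set v : E := (InnerProductSpace.toDual ℝ E).symm f with hvdef
  have hva : ∀ x : E, ⟪v, x⟫ = f x := fun x => InnerProductSpace.toDual_symm_apply
  have hfcb : f c < f b := hf c hc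
  have hvne : v ≠ 0 := by
    intro h0v
    rw [h0v] at hva
    have h1 := hva c
    have h2 := hva b
    simp only [inner_zero_left] at h1 h2
    rw [← h1, ← h2] at hfcb
    exact lt_irrefl _ hfcb
  have hfz : ∀ z ∈ C, f z ≤ f b := by
    intro z hz
    set q : ℕ → ℝ := fun m => 1/((m:ℝ)+1) with hqdef
    have hq01 : ∀ m : ℕ, 0 < q m ∧ q m ≤ 1 := by
      intro m
      constructor
      · positivity
      · rw [hqdef]
        simp only
        rw [div_le_one (by positivity)]
        linarith [Nat.cast_nonneg (α := ℝ) m]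
    have hp : ∀ m : ℕ, f ((q m) • c + ((1:ℝ) - q m) • z) < f b := by
      intro m
      refine hf _ ?_
      exact hCconv.combo_interior_self_mem_interior hc hz (hq01 m).1
        (by linarith [(hq01 m).2]) (by ring)
    have htend : Tendsto (fun m : ℕ => f ((q m) • c + ((1:ℝ) - q m) • z)) atTop (nhds (f z)) := by
      have h1 : Tendsto q atTop (nhds 0) := tendsto_one_div_add_atTop_nhds_zero_nat
      have h2 : Tendsto (fun m : ℕ => ((q m) • c + ((1:ℝ) - q m) • z)) atTop (nhds z) := by
        have := (h1.smul_const c).add (((tendsto_const_nhds (x := (1:ℝ))).sub h1).smul_const z)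
        simpa using this
      exact (f.continuous.tendsto z).comp h2
    exact le_of_tendsto htend (Eventually.of_forall (fun m => (hp m).le))
  set α : E := ‖v‖⁻¹ • v with hαdef
  have hαnorm : ‖α‖ = 1 := by
    rw [hαdef, norm_smul, norm_inv, norm_norm, inv_mul_cancel₀ (norm_ne_zero_iff.2 hvne)]
  have hαnormal : ∀ z ∈ C, ⟪α, z⟫ ≤ ⟪α, b⟫ := by
    intro z hz
    rw [hαdef, real_inner_smul_left, real_inner_smul_left, hva, hva]
    exact mul_le_mul_of_nonneg_left (hfz z hz) (by positivity)
  -- uniqueness via the gradient of the gauge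
  have keyβ : ∀ β : E, ‖β‖ = 1 → (∀ z ∈ C, ⟪β, z⟫ ≤ ⟪β, b⟫) →
      fderiv ℝ μ bp = (⟪β, bp⟫)⁻¹ • (innerSL ℝ β) ∧ r/2 ≤ ⟪β, bp⟫ := by
    intro β hβn hβnormal
    have hβD : ∀ w ∈ D, ⟪β, w⟫ ≤ ⟪β, bp⟫ := by
      intro w hw
      have := hβnormal (c + w) hw
      rw [hbdef] at this
      rw [inner_add_right, inner_add_right] at this
      linarith
    set cβ : ℝ := ⟪β, bp⟫ with hcβdef
    have hcβ : r/2 ≤ cβ := by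
      have hmem : (r/2) • β ∈ D := by
        apply hballD
        rw [mem_ball_zero_iff, norm_smul, Real.norm_eq_abs, abs_of_pos (by positivity), hβn]
        linarith
      have := hβD _ hmem
      rwa [real_inner_smul_right, real_inner_self_eq_norm_sq, hβn, one_pow, mul_one] at this
    have hcβpos : 0 < cβ := by linarith
    have subgrad : ∀ w : E, ⟪β, w⟫ ≤ cβ * μ w := by
      intro w
      by_contra hlt
      push_neg at hlt
      have hmuw : μ w < ⟪β, w⟫ / cβ := by
        rw [lt_div_iff₀ hcβpos]; linarith [mul_comm cβ (μ w)]
      set u : ℝ := (μ w + ⟪β, w⟫/cβ)/2 with hudef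
      have hu1 : μ w < u := by rw [hudef]; linarith
      have hu2 : u < ⟪β, w⟫/cβ := by rw [hudef]; linarith
      obtain ⟨t, ht0, htu, hmem⟩ := exists_lt_of_gauge_lt habs hu1
      obtain ⟨w', hw', hw'eq⟩ := hmem
      have h1 : ⟪β, w⟫ = t * ⟪β, w'⟫ := by
        rw [← hw'eq]; exact real_inner_smul_right β w' t
      have h2 : ⟪β, w'⟫ ≤ cβ := hβD _ hw'
      have h3 : ⟪β, w⟫ ≤ t * cβ := by
        rw [h1]; exact mul_le_mul_of_nonneg_left h2 ht0.le
      have h4 : t * cβ < u * cβ := by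
        exact mul_lt_mul_of_pos_right htu hcβpos
      have h5 : u * cβ < ⟪β, w⟫ := (lt_div_iff₀ hcβpos).1 hu2
      linarith
    -- local minimum of φ at bp gives the gradient identity
    set φ : E → ℝ := fun w => μ w - cβ⁻¹ * ⟪β, w⟫ with hφdef
    have hφ0 : ∀ w, 0 ≤ φ w := by
      intro w
      have := subgrad w
      have h1 : cβ⁻¹ * ⟪β, w⟫ ≤ μ w := by
        rw [inv_mul_le_iff₀ hcβpos]
        exact this
      simp only [hφdef]
      linarith
    have hφbp : φ bp = 0 := by
      show μ bp - cβ⁻¹ * cβ = 0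
      rw [inv_mul_cancel₀ hcβpos.ne', hμbp]
      ring
    have hmin : IsLocalMin φ bp := by
      refine Filter.Eventually.of_forall (fun w => ?_)
      rw [hφbp]
      exact hφ0 w
    have hinnerdiff : DifferentiableAt ℝ (fun w : E => ⟪β, w⟫) bp :=
      (differentiableAt_const β).inner ℝ differentiableAt_id
    have hLdiff : DifferentiableAt ℝ (fun w : E => cβ⁻¹ * ⟪β, w⟫) bp :=
      hinnerdiff.const_mul _
    have hd0 : fderiv ℝ φ bp = 0 := hmin.fderiv_eq_zero
    have hsub : fderiv ℝ φ bp = fderiv ℝ μ bp - fderiv ℝ (fun w : E => cβ⁻¹ * ⟪β, w⟫) bp := by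
      rw [hφdef]
      exact fderiv_sub hdiffbp hLdiff
    have hLeq : (fun w : E => cβ⁻¹ * ⟪β, w⟫) = ⇑(cβ⁻¹ • innerSL ℝ β) := by
      funext w
      simp
    have hLd : fderiv ℝ (fun w : E => cβ⁻¹ * ⟪β, w⟫) bp = cβ⁻¹ • innerSL ℝ β := by
      rw [hLeq]
      exact ContinuousLinearMap.fderiv _
    refine ⟨?_, hcβ⟩
    have : (0 : E →L[ℝ] ℝ) = fderiv ℝ μ bp - cβ⁻¹ • innerSL ℝ β := by
      rw [← hLd, ← hsub, hd0]
    exact sub_eq_zero.1 this.symm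
  -- conclude uniqueness
  refine ⟨b, α, hbC, hbnotC, hbnear, hαnorm, hαnormal, ?_⟩
  intro β hβn hβnormal
  obtain ⟨hgβ, hcβr⟩ := keyβ β hβn hβnormal
  obtain ⟨hgα, hcαr⟩ := keyβ α hαnorm hαnormal
  set cβ : ℝ := ⟪β, bp⟫
  set cα : ℝ := ⟪α, bp⟫
  have hcβpos : 0 < cβ := by linarith
  have hcαpos : 0 < cα := by linarith
  have heq : cβ⁻¹ • (innerSL ℝ β) = cα⁻¹ • (innerSL ℝ α) := by rw [← hgβ, ← hgα]
  have heval : ∀ x : E, cβ⁻¹ * ⟪β, x⟫ = cα⁻¹ * ⟪α, x⟫ := by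
    intro x
    have := congrFun (congrArg (fun (L : E →L[ℝ] ℝ) => (L : E → ℝ)) heq) x
    simpa using this
  have hvec : cβ⁻¹ • β = cα⁻¹ • α := by
    have hz : ∀ x : E, ⟪cβ⁻¹ • β - cα⁻¹ • α, x⟫ = 0 := by
      intro x
      rw [inner_sub_left, real_inner_smul_left, real_inner_smul_left, heval x]
      ring
    have := hz (cβ⁻¹ • β - cα⁻¹ • α)
    rw [inner_self_eq_zero] at this
    exact sub_eq_zero.1 this
  have hnormeq : cβ⁻¹ = cα⁻¹ := by
    have h1 : ‖cβ⁻¹ • β‖ = cβ⁻¹ := by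
      rw [norm_smul, Real.norm_eq_abs, abs_of_pos (by positivity), hβn, mul_one]
    have h2 : ‖cα⁻¹ • α‖ = cα⁻¹ := by
      rw [norm_smul, Real.norm_eq_abs, abs_of_pos (by positivity), hαnorm, mul_one]
    rw [← h1, ← h2, hvec]
  have : cβ⁻¹ • β = cβ⁻¹ • α := by rw [hvec, hnormeq]
  exact smul_right_injective E (ne_of_gt (inv_pos.2 hcβpos)) this

set_option maxHeartbeats 4000000 in
lemma exists_exposed {S C : Set E}
    (hCclosed : IsClosed C) (hCconv : Convex ℝ C)
    (hfull : (interior C).Nonempty)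
    (hmax : ∀ K : Set E, IsClosed K → Convex ℝ K → interior K ∩ S = ∅ → C ⊆ K → K = C)
    {xb : E} (hxb : xb ∉ C) :
    ∃ α : E, ∃ α₀ : ℝ, ‖α‖ = 1 ∧ (∀ z ∈ C, ⟪α, z⟫ ≤ α₀) ∧ α₀ < ⟪α, xb⟫ ∧
      ∃ x : ℕ → E, (∀ t, x t ∈ S) ∧
        ∀ (δ : ℕ → E) (δ₀ : ℕ → ℝ), (∀ t, ‖δ t‖ = 1) →
          (∀ t, ∀ z ∈ C, ⟪δ t, z⟫ ≤ δ₀ t) → (∀ t, δ₀ t ≤ ⟪δ t, x t⟫) →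
          Tendsto (fun t => (δ t, δ₀ t)) atTop (nhds (α, α₀)) := by
  classical
  obtain ⟨c, hc⟩ := hfull
  obtain ⟨r₁, hr₁, hball⟩ := Metric.isOpen_iff.1 isOpen_interior c hc
  have hballC : Metric.ball c r₁ ⊆ C := hball.trans interior_subset
  have hCne : C.Nonempty := ⟨c, interior_subset hc⟩
  set h : E → ℝ := fun δ => sSup ((fun z => ⟪δ, z⟫) '' C) with hhdef
  set Bd : E → Prop := fun δ => BddAbove ((fun z => ⟪δ, z⟫) '' C) with hBddef
  have hle : ∀ δ z, z ∈ C → Bd δ → ⟪δ, z⟫ ≤ h δ := by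
    intro δ z hz hB
    exact le_csSup hB ⟨z, hz, rfl⟩
  have hsup_le : ∀ δ m, (∀ z ∈ C, ⟪δ, z⟫ ≤ m) → h δ ≤ m := by
    intro δ m hm
    refine csSup_le (hCne.image _) ?_
    rintro w ⟨z, hz, rfl⟩
    exact hm z hz
  have hBd_of : ∀ δ m, (∀ z ∈ C, ⟪δ, z⟫ ≤ m) → Bd δ := by
    intro δ m hm
    refine ⟨m, ?_⟩
    rintro w ⟨z, hz, rfl⟩
    exact hm z hz
  -- the boundary point on the segment from c to xb
  set u : E := xb - c with hudef
  set Tset : Set ℝ := {t : ℝ | t ∈ Set.Icc (0:ℝ) 1 ∧ c + t • u ∈ C} with hTsetdef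
  have hTclosed : IsClosed Tset := by
    have : Tset = Set.Icc (0:ℝ) 1 ∩ ((fun t : ℝ => c + t • u) ⁻¹' C) := rfl
    rw [this]
    exact isClosed_Icc.inter (hCclosed.preimage (by continuity))
  have hTne : (0:ℝ) ∈ Tset := by
    constructor
    · exact ⟨le_refl 0, by norm_num⟩
    · simpa using interior_subset hc
  have hTbdd : BddAbove Tset := ⟨1, fun t ht => ht.1.2⟩
  set T : ℝ := sSup Tset with hTdef
  have hTmem : T ∈ Tset := hTclosed.csSup_mem ⟨0, hTne⟩ hTbdd
  have hT1 : T < 1 := by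
    rcases lt_or_eq_of_le hTmem.1.2 with hlt | heq
    · exact hlt
    · exfalso
      have : c + T • u ∈ C := hTmem.2
      rw [heq, one_smul, hudef] at this
      simp only [add_sub_cancel] at this
      exact hxb this
  have hT0 : 0 < T := by
    set t₀ : ℝ := min (r₁/(2*(‖u‖+1))) 1 with ht₀def
    have ht₀pos : 0 < t₀ := by
      apply lt_min
      · positivity
      · norm_num
    have ht₀mem : t₀ ∈ Tset := by
      constructor
      · exact ⟨ht₀pos.le, min_le_right _ _⟩
      · apply hballC
        rw [mem_ball_iff_norm, add_sub_cancel_left, norm_smul, Real.norm_eq_abs,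
          abs_of_pos ht₀pos]
        have h1 : t₀ ≤ r₁/(2*(‖u‖+1)) := min_le_left _ _
        have h2 : t₀ * ‖u‖ ≤ r₁/(2*(‖u‖+1)) * ‖u‖ :=
          mul_le_mul_of_nonneg_right h1 (norm_nonneg u)
        have h3 : r₁/(2*(‖u‖+1)) * ‖u‖ < r₁ := by
          rw [div_mul_eq_mul_div, div_lt_iff₀ (by positivity)]
          nlinarith [norm_nonneg u]
        linarith
    exact lt_of_lt_of_le ht₀pos (le_csSup hTbdd ht₀mem)
  set b₀ : E := c + T • u with hb₀def
  have hb₀C : b₀ ∈ C := hTmem.2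
  have hb₀n : b₀ ∉ interior C := by
    intro hmem
    obtain ⟨ρ, hρ, hballρ⟩ := Metric.isOpen_iff.1 isOpen_interior b₀ hmem
    set σ : ℝ := ρ/(2*(‖u‖+1)) with hσdef
    have hσpos : 0 < σ := by positivity
    set t' : ℝ := min 1 (T + σ) with ht'def
    have ht'T : T < t' := lt_min hT1 (by linarith)
    have ht'mem : t' ∈ Tset := by
      constructor
      · exact ⟨by linarith [hTmem.1.1], min_le_left _ _⟩
      · have hpoint : c + t' • u = b₀ + (t' - T) • u := by
          rw [hb₀def, sub_smul]; abel
        rw [hpoint]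
        apply interior_subset
        apply hballρ
        rw [mem_ball_iff_norm, add_sub_cancel_left, norm_smul, Real.norm_eq_abs,
          abs_of_pos (by linarith : (0:ℝ) < t' - T)]
        have h1 : t' - T ≤ σ := by
          have := min_le_right 1 (T + σ)
          rw [ht'def]
          linarith [min_le_right 1 (T + σ)]
        have h2 : (t' - T) * ‖u‖ ≤ σ * ‖u‖ := mul_le_mul_of_nonneg_right h1 (norm_nonneg u)
        have h3 : σ * ‖u‖ < ρ := by
          rw [hσdef, div_mul_eq_mul_div, div_lt_iff₀ (by positivity)]
          nlinarith [norm_nonneg u]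
        linarith
    have := le_csSup hTbdd ht'mem
    rw [← hTdef] at this
    linarith
  -- choose a smooth point whose normal cuts xb
  have hsmooth : ∀ k : ℕ, ∃ bk αk : E, bk ∈ C ∧ bk ∉ interior C ∧ ‖bk - b₀‖ < 1/(k+1) ∧
      ‖αk‖ = 1 ∧ (∀ z ∈ C, ⟪αk, z⟫ ≤ ⟪αk, bk⟫) ∧
      ∀ β : E, ‖β‖ = 1 → (∀ z ∈ C, ⟪β, z⟫ ≤ ⟪β, bk⟫) → β = αk := by
    intro k
    exact exists_smooth_normal hCclosed hCconv hc hb₀C hb₀n (by positivity : (0:ℝ) < 1/(k+1))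
  choose bk αk hbkC hbkn hbknear hαknorm hαknormal hαkuniq using hsmooth
  have hkey : ∃ k, ⟪αk k, bk k⟫ < ⟪αk k, xb⟫ := by
    by_contra hcon
    push_neg at hcon
    obtain ⟨αs, hαsmem, φ, hφmono, hφtend⟩ :=
      (isCompact_sphere (0:E) 1).tendsto_subseq
        (fun k => by simp [mem_sphere_zero_iff_norm, hαknorm k] : ∀ k, αk k ∈ Metric.sphere (0:E) 1)
    have hαsnorm : ‖αs‖ = 1 := mem_sphere_zero_iff_norm.1 hαsmem
    have hbktend : Tendsto (fun m => bk (φ m)) atTop (nhds b₀) := by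
      rw [tendsto_iff_dist_tendsto_zero]
      refine squeeze_zero (g := fun m : ℕ => 1/((m:ℝ)+1)) (fun m => dist_nonneg) (fun m => ?_)
        tendsto_one_div_add_atTop_nhds_zero_nat
      have h1 : dist (bk (φ m)) b₀ < 1/((φ m : ℝ) + 1) := by
        rw [dist_eq_norm]; exact hbknear (φ m)
      have h2 : (1:ℝ)/((φ m : ℝ) + 1) ≤ 1/((m:ℝ)+1) := by
        apply one_div_le_one_div_of_le (by positivity)
        have : (m:ℝ) ≤ (φ m : ℝ) := Nat.cast_le.2 hφmono.le_apply
        linarith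
      linarith
    have hαsnormal : ∀ z ∈ C, ⟪αs, z⟫ ≤ ⟪αs, b₀⟫ := by
      intro z hz
      have hL : Tendsto (fun m => ⟪αk (φ m), z⟫) atTop (nhds ⟪αs, z⟫) :=
        hφtend.inner tendsto_const_nhds
      have hR : Tendsto (fun m => ⟪αk (φ m), bk (φ m)⟫) atTop (nhds ⟪αs, b₀⟫) :=
        hφtend.inner hbktend
      exact le_of_tendsto_of_tendsto hL hR
        (Eventually.of_forall (fun m => hαknormal (φ m) z hz))
    have hαsxb : ⟪αs, xb⟫ ≤ ⟪αs, b₀⟫ := by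
      have hL : Tendsto (fun m => ⟪αk (φ m), xb⟫) atTop (nhds ⟪αs, xb⟫) :=
        hφtend.inner tendsto_const_nhds
      have hR : Tendsto (fun m => ⟪αk (φ m), bk (φ m)⟫) atTop (nhds ⟪αs, b₀⟫) :=
        hφtend.inner hbktend
      exact le_of_tendsto_of_tendsto hL hR (Eventually.of_forall (fun m => hcon (φ m)))
    -- contradiction
    have hcin : c + (r₁/2) • αs ∈ C := by
      apply hballC
      rw [mem_ball_iff_norm, add_sub_cancel_left, norm_smul, Real.norm_eq_abs,
        abs_of_pos (by positivity : (0:ℝ) < r₁/2), hαsnorm]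
      linarith
    have h1 := hαsnormal _ hcin
    rw [inner_add_right, real_inner_smul_right, real_inner_self_eq_norm_sq, hαsnorm] at h1
    have hb₀in : ⟪αs, b₀⟫ = ⟪αs, c⟫ + T * ⟪αs, u⟫ := by
      rw [hb₀def, inner_add_right, real_inner_smul_right]
    have hxbin : ⟪αs, xb⟫ = ⟪αs, c⟫ + ⟪αs, u⟫ := by
      rw [show xb = c + u by rw [hudef]; abel, inner_add_right]
    have hupos : 0 < ⟪αs, u⟫ := by
      rw [hb₀in] at h1
      nlinarith
    rw [hxbin, hb₀in] at hαsxb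
    nlinarith
  obtain ⟨k, hcut⟩ := hkey
  set b : E := bk k with hbdef
  set α : E := αk k with hαdef
  have hα1 : ‖α‖ = 1 := hαknorm k
  have hnormal : ∀ z ∈ C, ⟪α, z⟫ ≤ ⟪α, b⟫ := hαknormal k
  have huniq : ∀ β : E, ‖β‖ = 1 → (∀ z ∈ C, ⟪β, z⟫ ≤ ⟪β, b⟫) → β = α := hαkuniq k
  have hbC : b ∈ C := hbkC k
  have hbn : b ∉ interior C := hbkn k
  have hBdα : Bd α := hBd_of α _ hnormal
  have hα₀ : h α = ⟪α, b⟫ := le_antisymm (hsup_le α _ hnormal) (hle α b hbC hBdα)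
  have honetwo : ∀ t : ℕ, (1:ℝ)/(t+1) ≤ 2/(t+1) := by
    intro t
    have ht : (0:ℝ) < t+1 := by positivity
    rw [div_le_div_iff₀ ht ht]
    nlinarith
  -- the enlargement sets
  set N : ℕ → E → Prop := fun t δ => ‖δ - α‖ < 1/(t+1) ∧ Bd δ ∧ h δ ≤ h α + 1/(t+1) with hNdef
  set bnd : ℕ → E → ℝ := fun t δ => if N t δ then h α + 2/(t+1) else h δ with hbnddef
  set K : ℕ → Set E := fun t => {x | ∀ δ : E, ‖δ‖ = 1 → Bd δ → ⟪δ, x⟫ ≤ bnd t δ} with hKdef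
  have hmemK : ∀ t x, x ∈ K t ↔ ∀ δ : E, ‖δ‖ = 1 → Bd δ → ⟪δ, x⟫ ≤ bnd t δ := by
    intro t x; rw [hKdef]; rfl
  have hCK : ∀ t, C ⊆ K t := by
    intro t z hz
    rw [hmemK]
    intro δ h1 h2
    by_cases hN : N t δ
    · rw [hbnddef]
      simp only [if_pos hN]
      have h3 := hle δ z hz h2
      have h4 := hN.2.2
      linarith [honetwo t]
    · rw [hbnddef]
      simp only [if_neg hN]
      exact hle δ z hz h2
  have hKclosed : ∀ t, IsClosed (K t) := by
    intro t
    have heq : K t = ⋂ (δ : E) (_ : ‖δ‖ = 1 ∧ Bd δ), {x : E | ⟪δ, x⟫ ≤ bnd t δ} := by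
      ext x
      simp only [Set.mem_iInter, Set.mem_setOf_eq, hmemK]
      constructor
      · intro hx δ hδ
        exact hx δ hδ.1 hδ.2
      · intro hx δ h1 h2
        exact hx δ ⟨h1, h2⟩
    rw [heq]
    refine isClosed_iInter (fun δ => isClosed_iInter (fun hδ => ?_))
    exact isClosed_le (Continuous.inner continuous_const continuous_id) continuous_const
  have hKconv : ∀ t, Convex ℝ (K t) := by
    intro t x hx y hy a a' ha ha' haa
    rw [hmemK] at hx hy ⊢
    intro δ h1 h2
    have hxx := hx δ h1 h2
    have hyy := hy δ h1 h2
    have : ⟪δ, a • x + a' • y⟫ = a * ⟪δ, x⟫ + a' * ⟪δ, y⟫ := by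
      rw [inner_add_right, real_inner_smul_right, real_inner_smul_right]
    rw [this]
    calc a * ⟪δ, x⟫ + a' * ⟪δ, y⟫ ≤ a * bnd t δ + a' * bnd t δ :=
          add_le_add (mul_le_mul_of_nonneg_left hxx ha) (mul_le_mul_of_nonneg_left hyy ha')
      _ = bnd t δ := by rw [← add_mul, haa, one_mul]
  -- bump lemma : K t is strictly bigger than C
  have hbump : ∀ t : ℕ, ∃ ρ : ℝ, 0 < ρ ∧ ∀ w : E, ‖w - b‖ ≤ ρ → w ∈ K t := by
    intro t
    by_contra hcon
    push_neg at hcon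
    have hseq : ∀ j : ℕ, ∃ w δ' : E, ‖w - b‖ ≤ 1/(j+1) ∧ ‖δ'‖ = 1 ∧ Bd δ' ∧
        bnd t δ' < ⟪δ', w⟫ := by
      intro j
      obtain ⟨w, hw1, hw2⟩ := hcon (1/(j+1)) (by positivity)
      rw [hmemK] at hw2
      push_neg at hw2
      obtain ⟨δ', h1, h2, h3⟩ := hw2
      exact ⟨w, δ', hw1, h1, h2, h3⟩
    choose w δs hw1 hδnorm hδBd hδgt using hseq
    have hnotN : ∀ j : ℕ, t ≤ j → ¬ N t (δs j) := by
      intro j hj hN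
      have h4 := hδgt j
      rw [hbnddef] at h4
      simp only [if_pos hN] at h4
      have h5 : ⟪δs j, w j⟫ = ⟪δs j, b⟫ + ⟪δs j, w j - b⟫ := by
        rw [← inner_add_right]
        congr 1
        abel
      have h6 : ⟪δs j, b⟫ ≤ h (δs j) := hle _ b hbC hN.2.1
      have h7 : ⟪δs j, w j - b⟫ ≤ 1/((j:ℝ)+1) := by
        calc ⟪δs j, w j - b⟫ ≤ ‖δs j‖ * ‖w j - b‖ := real_inner_le_norm _ _
          _ ≤ 1/((j:ℝ)+1) := by rw [hδnorm j, one_mul]; exact hw1 j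
      have h8 : (1:ℝ)/((j:ℝ)+1) ≤ 1/((t:ℝ)+1) := by
        apply one_div_le_one_div_of_le (by positivity)
        have : (t:ℝ) ≤ (j:ℝ) := Nat.cast_le.2 hj
        linarith
      have h9 := hN.2.2
      have h10 : (2:ℝ)/((t:ℝ)+1) = 1/((t:ℝ)+1) + 1/((t:ℝ)+1) := by ring
      rw [h5] at h4
      linarith
    obtain ⟨δ', hδ'mem, φ, hφmono, hφtend⟩ :=
      (isCompact_sphere (0:E) 1).tendsto_subseq
        (fun j => by simp [mem_sphere_zero_iff_norm, hδnorm j] : ∀ j, δs j ∈ Metric.sphere (0:E) 1)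
    have hδ'norm : ‖δ'‖ = 1 := mem_sphere_zero_iff_norm.1 hδ'mem
    have hjbig : ∀ j : ℕ, t ≤ j → h (δs j) < ⟪δs j, b⟫ + 1/((j:ℝ)+1) := by
      intro j hj
      have h4 := hδgt j
      rw [hbnddef] at h4
      simp only [if_neg (hnotN j hj)] at h4
      have h5 : ⟪δs j, w j⟫ ≤ ⟪δs j, b⟫ + 1/((j:ℝ)+1) := by
        have h5' : ⟪δs j, w j⟫ = ⟪δs j, b⟫ + ⟪δs j, w j - b⟫ := by
          rw [← inner_add_right]; congr 1; abel
        rw [h5']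
        have : ⟪δs j, w j - b⟫ ≤ 1/((j:ℝ)+1) := by
          calc ⟪δs j, w j - b⟫ ≤ ‖δs j‖ * ‖w j - b‖ := real_inner_le_norm _ _
            _ ≤ 1/((j:ℝ)+1) := by rw [hδnorm j, one_mul]; exact hw1 j
        linarith
      linarith
    have hφge : ∀ m : ℕ, t ≤ m → t ≤ φ m := fun m hm => hm.trans hφmono.le_apply
    have hδ'normal : ∀ z ∈ C, ⟪δ', z⟫ ≤ ⟪δ', b⟫ := by
      intro z hz
      have hL : Tendsto (fun m => ⟪δs (φ m), z⟫) atTop (nhds ⟪δ', z⟫) :=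
        hφtend.inner tendsto_const_nhds
      have hR : Tendsto (fun m => ⟪δs (φ m), b⟫ + 1/((φ m : ℝ)+1)) atTop (nhds (⟪δ', b⟫ + 0)) := by
        refine (hφtend.inner tendsto_const_nhds).add ?_
        refine squeeze_zero (fun m => by positivity) (fun m => ?_)
          tendsto_one_div_add_atTop_nhds_zero_nat
        apply one_div_le_one_div_of_le (by positivity)
        have : (m:ℝ) ≤ (φ m : ℝ) := Nat.cast_le.2 hφmono.le_apply
        linarith
      rw [add_zero] at hR
      refine le_of_tendsto_of_tendsto hL hR ?_
      filter_upwards [eventually_ge_atTop t] with m hm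
      have h1 : ⟪δs (φ m), z⟫ ≤ h (δs (φ m)) := hle _ z hz (hδBd (φ m))
      have h2 := hjbig (φ m) (hφge m hm)
      exact le_of_lt (lt_of_le_of_lt h1 h2)
    have hδ'α : δ' = α := huniq δ' hδ'norm hδ'normal
    -- eventually δs (φ m) satisfies N t, contradiction
    have hev1 : ∀ᶠ m in atTop, ‖δs (φ m) - α‖ < 1/((t:ℝ)+1) := by
      rw [hδ'α] at hφtend
      have := Metric.tendsto_nhds.1 hφtend (1/((t:ℝ)+1)) (by positivity)
      filter_upwards [this] with m hm
      rwa [dist_eq_norm] at hm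
    have hev2 : ∀ᶠ m in atTop, h (δs (φ m)) ≤ h α + 1/((t:ℝ)+1) := by
      have hR : Tendsto (fun m => ⟪δs (φ m), b⟫ + 1/((φ m : ℝ)+1)) atTop (nhds (⟪δ', b⟫ + 0)) := by
        refine (hφtend.inner tendsto_const_nhds).add ?_
        refine squeeze_zero (fun m => by positivity) (fun m => ?_)
          tendsto_one_div_add_atTop_nhds_zero_nat
        apply one_div_le_one_div_of_le (by positivity)
        have : (m:ℝ) ≤ (φ m : ℝ) := Nat.cast_le.2 hφmono.le_apply
        linarith
      rw [add_zero, hδ'α] at hR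
      have hlt : ⟪α, b⟫ < h α + 1/((t:ℝ)+1) := by
        rw [hα₀]
        have : (0:ℝ) < 1/((t:ℝ)+1) := by positivity
        linarith
      have := hR.eventually_lt_const hlt
      filter_upwards [this, eventually_ge_atTop t] with m hm1 hm2
      have := hjbig (φ m) (hφge m hm2)
      linarith
    obtain ⟨m, hm1, hm2, hm3⟩ := (hev1.and (hev2.and (eventually_ge_atTop t))).exists
    exact hnotN (φ m) (hφge m hm3) ⟨hm1, hδBd (φ m), hm2⟩
  -- K t strictly contains C
  have hKne : ∀ t : ℕ, K t ≠ C := by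
    intro t heq
    obtain ⟨ρ, hρ, hρK⟩ := hbump t
    have : ∃ w : E, w ∈ Metric.ball b ρ ∧ w ∉ C := by
      by_contra hcon
      push_neg at hcon
      exact hbn (mem_interior.2 ⟨Metric.ball b ρ, fun w hw => hcon w hw, Metric.isOpen_ball,
        Metric.mem_ball_self hρ⟩)
    obtain ⟨w, hw1, hw2⟩ := this
    have : w ∈ K t := hρK w (by rw [← dist_eq_norm]; exact (mem_ball.1 hw1).le)
    rw [heq] at this
    exact hw2 this
  -- get points of S in the interior of K t
  have hsex : ∀ t : ℕ, ∃ s : E, s ∈ interior (K t) ∧ s ∈ S := by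
    intro t
    have hne : interior (K t) ∩ S ≠ ∅ := by
      intro hemp
      exact hKne t (hmax (K t) (hKclosed t) (hKconv t) hemp (hCK t))
    obtain ⟨s, hs⟩ := Set.nonempty_iff_ne_empty.2 hne
    exact ⟨s, hs.1, hs.2⟩
  choose sq hsint hsS using hsex
  have hstrict : ∀ t : ℕ, ∀ δ : E, ‖δ‖ = 1 → Bd δ → ⟪δ, sq t⟫ < bnd t δ := by
    intro t δ h1 h2
    obtain ⟨ε', hε', hballε⟩ := Metric.mem_nhds_iff.1 (mem_interior_iff_mem_nhds.1 (hsint t))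
    have hmem : sq t + (ε'/2) • δ ∈ K t := by
      apply hballε
      rw [mem_ball_iff_norm, add_sub_cancel_left, norm_smul, Real.norm_eq_abs,
        abs_of_pos (by positivity : (0:ℝ) < ε'/2), h1]
      linarith
    rw [hmemK] at hmem
    have := hmem δ h1 h2
    rw [inner_add_right, real_inner_smul_right, real_inner_self_eq_norm_sq, h1] at this
    nlinarith
  -- final packaging
  refine ⟨α, h α, hα1, fun z hz => hle α z hz hBdα, by rw [hα₀]; exact hcut, sq, hsS, ?_⟩
  intro δ δ₀ hδn hδvalid hδcut
  have hBdδ : ∀ t, Bd (δ t) := fun t => hBd_of _ (δ₀ t) (hδvalid t)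
  have hhδ : ∀ t, h (δ t) ≤ δ₀ t := fun t => hsup_le _ _ (hδvalid t)
  have hNt : ∀ t, N t (δ t) := by
    intro t
    by_contra hnN
    have h1 := hstrict t (δ t) (hδn t) (hBdδ t)
    rw [hbnddef] at h1
    simp only [if_neg hnN] at h1
    have h2 := hδcut t
    have h3 := hhδ t
    linarith
  have hδtend : Tendsto δ atTop (nhds α) := by
    rw [tendsto_iff_dist_tendsto_zero]
    refine squeeze_zero (fun t => dist_nonneg) (fun t => ?_)
      tendsto_one_div_add_atTop_nhds_zero_nat
    rw [dist_eq_norm]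
    exact ((hNt t).1).le
  have hδ₀tend : Tendsto δ₀ atTop (nhds (h α)) := by
    rw [Metric.tendsto_atTop]
    intro ε hε
    -- upper bound
    have hup : ∀ t, δ₀ t < h α + 2/((t:ℝ)+1) := by
      intro t
      have h1 := hstrict t (δ t) (hδn t) (hBdδ t)
      rw [hbnddef] at h1
      simp only [if_pos (hNt t)] at h1
      have h2 := hδcut t
      linarith
    obtain ⟨T₁, hT₁⟩ := (Metric.tendsto_atTop.1 (tendsto_one_div_add_atTop_nhds_zero_nat (𝕜 := ℝ))) (ε/4)
      (by positivity)
    -- lower bound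
    obtain ⟨wz, hwzmem, hwzgt⟩ := exists_lt_of_lt_csSup (hCne.image (fun z => ⟪α, z⟫))
      (by linarith : h α - ε/2 < h α)
    obtain ⟨z, hzC, hzeq⟩ := hwzmem
    have hzgt : h α - ε/2 < ⟪α, z⟫ := by rw [show ⟪α, z⟫ = wz from hzeq]; exact hwzgt
    have hztend : Tendsto (fun t => ⟪δ t, z⟫) atTop (nhds ⟪α, z⟫) :=
      hδtend.inner tendsto_const_nhds
    obtain ⟨T₂, hT₂⟩ := (Metric.tendsto_atTop.1 hztend) (ε/4) (by positivity)
    refine ⟨max T₁ T₂, fun t ht => ?_⟩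
    have ht1 := hT₁ t (le_of_max_le_left ht)
    have ht2 := hT₂ t (le_of_max_le_right ht)
    rw [Real.dist_eq] at ht1 ht2 ⊢
    have hup' : δ₀ t - h α < ε := by
      have := hup t
      have h2 : (2:ℝ)/((t:ℝ)+1) < ε := by
        have habs : |1/((t:ℝ)+1) - 0| < ε/4 := ht1
        rw [sub_zero, abs_of_pos (by positivity : (0:ℝ) < 1/((t:ℝ)+1))] at habs
        have ht0 : (0:ℝ) < (t:ℝ)+1 := by positivity
        rw [div_lt_iff₀ ht0] at habs ⊢
        nlinarith
      linarith
    have hlow' : h α - ε < δ₀ t := by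
      have h1 : |⟪δ t, z⟫ - ⟪α, z⟫| < ε/4 := ht2
      have h2 : ⟪α, z⟫ - ε/4 < ⟪δ t, z⟫ := by
        have := abs_lt.1 h1
        linarith [this.1]
      have h3 : ⟪δ t, z⟫ ≤ δ₀ t := hδvalid t z hzC
      linarith
    rw [abs_lt]
    constructor <;> linarith
  exact hδtend.prodMk_nhds hδ₀tend

theorem stmt15 (d : ℕ)
    (S C : Set (EuclideanSpace ℝ (Fin d)))
    (hS : IsClosed S) (hCclosed : IsClosed C) (hCconv : Convex ℝ C)
    (hfull : (interior C).Nonempty) (hfree : interior C ∩ S = ∅)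
    (hmax : ∀ K : Set (EuclideanSpace ℝ (Fin d)),
      IsClosed K → Convex ℝ K → interior K ∩ S = ∅ → C ⊆ K → K = C) :
    ∃ I : Set (EuclideanSpace ℝ (Fin d) × ℝ),
      C = {x | ∀ p ∈ I, ⟪p.1, x⟫ ≤ p.2} ∧
      ∀ p ∈ I, p.1 ≠ 0 ∧ ∃ x : ℕ → EuclideanSpace ℝ (Fin d),
        (∀ t, x t ∈ S) ∧
        ∀ (δ : ℕ → EuclideanSpace ℝ (Fin d)) (δ₀ : ℕ → ℝ),
          (∀ t, ‖δ t‖ = ‖p.1‖) →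
          (∀ t, ∀ z ∈ C, ⟪δ t, z⟫ ≤ δ₀ t) →
          (∀ t, δ₀ t ≤ ⟪δ t, x t⟫) →
          Filter.Tendsto (fun t => (δ t, δ₀ t)) Filter.atTop (nhds (p.1, p.2)) := by
  classical
  set I : Set (EuclideanSpace ℝ (Fin d) × ℝ) :=
    {p | (∀ z ∈ C, ⟪p.1, z⟫ ≤ p.2) ∧ p.1 ≠ 0 ∧ ∃ x : ℕ → EuclideanSpace ℝ (Fin d),
      (∀ t, x t ∈ S) ∧
      ∀ (δ : ℕ → EuclideanSpace ℝ (Fin d)) (δ₀ : ℕ → ℝ),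
        (∀ t, ‖δ t‖ = ‖p.1‖) →
        (∀ t, ∀ z ∈ C, ⟪δ t, z⟫ ≤ δ₀ t) →
        (∀ t, δ₀ t ≤ ⟪δ t, x t⟫) →
        Filter.Tendsto (fun t => (δ t, δ₀ t)) Filter.atTop (nhds (p.1, p.2))} with hIdef
  refine ⟨I, ?_, fun p hp => ⟨hp.2.1, hp.2.2⟩⟩
  ext xb
  simp only [Set.mem_setOf_eq]
  constructor
  · intro hxb p hp
    exact hp.1 xb hxb
  · intro hxb
    by_contra hnot
    obtain ⟨α, α₀, hα1, hvalid, hcut, x, hxS, hexp⟩ :=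
      exists_exposed hCclosed hCconv hfull hmax hnot
    have hmem : (α, α₀) ∈ I := by
      refine ⟨hvalid, by simp only [ne_eq]; intro h0; rw [h0] at hα1; simp at hα1, x, hxS, ?_⟩
      intro δ δ₀ hn hv hc
      refine hexp δ δ₀ (fun t => ?_) hv hc
      rw [hn t]
      exact hα1
    have := hxb (α, α₀) hmem
    simp only at this
    linarith
end

section
/- Let Γ : D^m → D^n be strictly non-expansive. Then the set {(Γ(β), β) : β ∈ D^m} is compact, and for any two distinct β', β'' ∈ D^m, the midpoint ((Γ(β') + Γ(β''))/2, (β' + β'')/2) lies in the interior of C_Γ; in particular C_Γ is full-dimensional. -/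
open scoped RealInnerProductSpace

theorem stmt18 (n m : ℕ)
    (Γ : EuclideanSpace ℝ (Fin m) → EuclideanSpace ℝ (Fin n))
    (hΓ : ∀ β : EuclideanSpace ℝ (Fin m), ‖β‖ = 1 → ‖Γ β‖ = 1)
    (hstrict : ∀ β β' : EuclideanSpace ℝ (Fin m), ‖β‖ = 1 → ‖β'‖ = 1 → β ≠ β' →
      ‖Γ β - Γ β'‖ < ‖β - β'‖)
    (C : Set (EuclideanSpace ℝ (Fin n) × EuclideanSpace ℝ (Fin m)))
    (hC : C = {p | ∀ β : EuclideanSpace ℝ (Fin m), ‖β‖ = 1 →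
      0 ≤ ⟪Γ β, p.1⟫ - ⟪β, p.2⟫}) :
    IsCompact {p : EuclideanSpace ℝ (Fin n) × EuclideanSpace ℝ (Fin m) |
      ∃ β, ‖β‖ = 1 ∧ p = (Γ β, β)} ∧
    (∀ β' β'' : EuclideanSpace ℝ (Fin m), ‖β'‖ = 1 → ‖β''‖ = 1 → β' ≠ β'' →
      ((1 / 2 : ℝ) • (Γ β' + Γ β''), (1 / 2 : ℝ) • (β' + β'')) ∈ interior C) ∧
    (interior C).Nonempty := by
  -- key inner-product inequalities on the unit sphere
  have keylt : ∀ β β' : EuclideanSpace ℝ (Fin m), ‖β‖ = 1 → ‖β'‖ = 1 → β ≠ β' →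
      ⟪β, β'⟫ < ⟪Γ β, Γ β'⟫ := by
    intro β β' hβ hβ' hne
    have h1 := @norm_sub_sq_real (EuclideanSpace ℝ (Fin m)) _ _ β β'
    have h2 := @norm_sub_sq_real (EuclideanSpace ℝ (Fin n)) _ _ (Γ β) (Γ β')
    have h3 := hstrict β β' hβ hβ' hne
    have h4 : ‖Γ β - Γ β'‖ ^ 2 < ‖β - β'‖ ^ 2 := by
      nlinarith [norm_nonneg (Γ β - Γ β'), norm_nonneg (β - β')]
    rw [h1, h2, hβ, hβ', hΓ β hβ, hΓ β' hβ'] at h4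
    linarith
  have keyle : ∀ β β' : EuclideanSpace ℝ (Fin m), ‖β‖ = 1 → ‖β'‖ = 1 →
      ⟪β, β'⟫ ≤ ⟪Γ β, Γ β'⟫ := by
    intro β β' hβ hβ' 
    rcases eq_or_ne β β' with rfl | hne
    · rw [real_inner_self_eq_norm_sq, real_inner_self_eq_norm_sq, hβ, hΓ β hβ]
    · exact (keylt β β' hβ hβ' hne).le
  -- Lipschitz / continuity of Γ on the sphere
  have hlip : LipschitzOnWith 1 Γ (Metric.sphere (0 : EuclideanSpace ℝ (Fin m)) 1) := by
    rw [lipschitzOnWith_iff_dist_le_mul]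
    intro x hx y hy
    rw [mem_sphere_zero_iff_norm] at hx hy
    rcases eq_or_ne x y with rfl | hne
    · simp
    · rw [dist_eq_norm, dist_eq_norm]
      have := hstrict x y hx hy hne
      simpa using this.le
  have hcont : ContinuousOn Γ (Metric.sphere (0 : EuclideanSpace ℝ (Fin m)) 1) :=
    hlip.continuousOn
  -- compactness
  have hset : {p : EuclideanSpace ℝ (Fin n) × EuclideanSpace ℝ (Fin m) |
      ∃ β, ‖β‖ = 1 ∧ p = (Γ β, β)} =
      (fun β => (Γ β, β)) '' (Metric.sphere (0 : EuclideanSpace ℝ (Fin m)) 1) := by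
    ext p
    simp only [Set.mem_setOf_eq, Set.mem_image, mem_sphere_zero_iff_norm]
    constructor
    · rintro ⟨β, hβ, rfl⟩; exact ⟨β, hβ, rfl⟩
    · rintro ⟨β, hβ, rfl⟩; exact ⟨β, hβ, rfl⟩
  have hcomp : IsCompact {p : EuclideanSpace ℝ (Fin n) × EuclideanSpace ℝ (Fin m) |
      ∃ β, ‖β‖ = 1 ∧ p = (Γ β, β)} := by
    rw [hset]
    exact (isCompact_sphere 0 1).image_of_continuousOn (hcont.prodMk continuousOn_id)
  -- interior membership for midpoints
  have main2 : ∀ β' β'' : EuclideanSpace ℝ (Fin m), ‖β'‖ = 1 → ‖β''‖ = 1 → β' ≠ β'' →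
      ((1 / 2 : ℝ) • (Γ β' + Γ β''), (1 / 2 : ℝ) • (β' + β'')) ∈ interior C := by
    intro β' β'' hβ' hβ'' hne
    set p : EuclideanSpace ℝ (Fin n) × EuclideanSpace ℝ (Fin m) :=
      ((1 / 2 : ℝ) • (Γ β' + Γ β''), (1 / 2 : ℝ) • (β' + β'')) with hp
    have hS : (Metric.sphere (0 : EuclideanSpace ℝ (Fin m)) 1).Nonempty :=
      ⟨β', by rwa [mem_sphere_zero_iff_norm]⟩
    have hfc : ContinuousOn (fun β => ⟪Γ β, p.1⟫ - ⟪β, p.2⟫)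
        (Metric.sphere (0 : EuclideanSpace ℝ (Fin m)) 1) :=
      (hcont.inner continuousOn_const).sub (continuousOn_id.inner continuousOn_const)
    obtain ⟨x, hxS, hxmin'⟩ := (isCompact_sphere (0 : EuclideanSpace ℝ (Fin m)) 1).exists_isMinOn
      hS hfc
    have hxmin : ∀ y ∈ Metric.sphere (0 : EuclideanSpace ℝ (Fin m)) 1,
        (fun β => ⟪Γ x, p.1⟫ - ⟪x, p.2⟫) x ≤ ⟪Γ y, p.1⟫ - ⟪y, p.2⟫ := fun y hy => hxmin' hy
    rw [mem_sphere_zero_iff_norm] at hxS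
    set δ : ℝ := ⟪Γ x, p.1⟫ - ⟪x, p.2⟫ with hδ
    have hval : ∀ β : EuclideanSpace ℝ (Fin m), ‖β‖ = 1 →
        ⟪Γ β, p.1⟫ - ⟪β, p.2⟫ =
        (1/2 : ℝ) * ((⟪Γ β, Γ β'⟫ - ⟪β, β'⟫) + (⟪Γ β, Γ β''⟫ - ⟪β, β''⟫)) := by
      intro β hβ
      simp only [hp, real_inner_smul_right, inner_add_right]
      ring
    have hδpos : 0 < δ := by
      rw [hδ, hval x hxS]
      have h1 := keyle x β' hxS hβ'
      have h2 := keyle x β'' hxS hβ''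
      rcases eq_or_ne x β' with rfl | hne'
      · have h3 := keylt x β'' hxS hβ'' hne
        linarith
      · have h3 := keylt x β' hxS hβ' hne'
        linarith
    have hball : Metric.ball p (δ / 2) ⊆ C := by
      intro q hq
      rw [hC]
      intro β hβ
      have hmin : δ ≤ ⟪Γ β, p.1⟫ - ⟪β, p.2⟫ :=
        hxmin β (by rwa [mem_sphere_zero_iff_norm])
      have hd : dist q p < δ / 2 := Metric.mem_ball.mp hq
      have hd1 : ‖p.1 - q.1‖ < δ / 2 := by
        rw [← dist_eq_norm, dist_comm]
        calc dist q.1 p.1 ≤ dist q p := by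
              rw [Prod.dist_eq]; exact le_max_left _ _
          _ < δ / 2 := hd
      have hd2 : ‖q.2 - p.2‖ < δ / 2 := by
        rw [← dist_eq_norm]
        calc dist q.2 p.2 ≤ dist q p := by
              rw [Prod.dist_eq]; exact le_max_right _ _
          _ < δ / 2 := hd
      have e1 : ⟪Γ β, p.1⟫ - ⟪Γ β, q.1⟫ ≤ ‖p.1 - q.1‖ := by
        have := real_inner_le_norm (Γ β) (p.1 - q.1)
        rw [inner_sub_right, hΓ β hβ, one_mul] at this
        linarith
      have e2 : ⟪β, q.2⟫ - ⟪β, p.2⟫ ≤ ‖q.2 - p.2‖ := by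
        have := real_inner_le_norm β (q.2 - p.2)
        rw [inner_sub_right, hβ, one_mul] at this
        linarith
      linarith
    exact mem_interior.mpr ⟨Metric.ball p (δ / 2), hball, Metric.isOpen_ball,
      Metric.mem_ball_self (half_pos hδpos)⟩
  refine ⟨hcomp, main2, ?_⟩
  by_cases hE : ∃ β : EuclideanSpace ℝ (Fin m), ‖β‖ = 1
  · obtain ⟨β₀, hβ₀⟩ := hE
    have hneg : ‖-β₀‖ = 1 := by rwa [norm_neg]
    have hne : β₀ ≠ -β₀ := by
      intro h
      have h2 : β₀ + β₀ = 0 := by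
        nth_rewrite 2 [h]; simp
      have : β₀ = 0 := by
        have := congrArg (fun v => (1/2 : ℝ) • v) h2
        simpa [smul_add, ← two_smul ℝ, smul_smul] using this
      rw [this] at hβ₀; simp at hβ₀
    exact ⟨_, main2 β₀ (-β₀) hβ₀ hneg hne⟩
  · have : C = Set.univ := by
      rw [hC]
      ext q
      simp only [Set.mem_setOf_eq, Set.mem_univ, iff_true]
      intro β hβ
      exact absurd ⟨β, hβ⟩ hE
    rw [this, interior_univ]
    exact ⟨0, trivial⟩
end
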